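/- Suppose n is odd. If φ ∈ Der(𝓗, 𝒲) satisfies φ(𝔑) = 0, then φ = 0. -/

import Mathlib

/-!
A concrete model of the divided power superalgebra `O(2m,n;t)` over a field `F` of
characteristic `p`, the generalized Witt superalgebra `W(2m,n;t)`, the Hamiltonian
superalgebra `H(2m,n;t)`, their even parts `𝒲`, `𝓗`, the ideal `𝔑`, and the
exceptional maps `Φ`, `Θ`, `Ψ`, used in
"Derivations for the even part of the Hamiltonian superalgebra in positive characteristic".

Elements of `O` are recorded by their coordinates with respect to the standard basis
`x^(α) x^u`, where `α i < p ^ t i` and `u ⊆ {1,…,n}` (odd variables).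
A superderivation `Σ aᵢ ∂ᵢ ∈ W` is recorded by its tuple of coefficients `aᵢ ∈ O`.
-/

namespace HamEven

/-- Multi-indices `α` with `α i ≤ π i = p ^ t i - 1`. -/
abbrev MIdx (p m : ℕ) (t : Fin (2 * m) → ℕ) : Type := ∀ i : Fin (2 * m), Fin (p ^ t i)

/-- Basis indices `(α, u)` of `O(2m,n;t)`, i.e. `x^(α) x^u`. -/
abbrev BIdx (p m n : ℕ) (t : Fin (2 * m) → ℕ) : Type := MIdx p m t × Finset (Fin n)

/-- The underlying space of `O(2m,n;t)`: coordinates w.r.t. the basis `x^(α)x^u`. -/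
abbrev O (p m n : ℕ) (t : Fin (2 * m) → ℕ) (F : Type) [Field F] : Type := BIdx p m n t → F

/-- The index set `Y = Y₀ ∪ Y₁` of the variables. -/
abbrev Y (m n : ℕ) : Type := Fin (2 * m) ⊕ Fin n

/-- The underlying space of `W(2m,n;t)`: a tuple `(aᵢ)` stands for `Σ aᵢ ∂ᵢ`. -/
abbrev W (p m n : ℕ) (t : Fin (2 * m) → ℕ) (F : Type) [Field F] : Type := Y m n → O p m n t F

/-- The sign `ε(u,v)` with `x^u x^v = ε(u,v) x^(u ∪ v)` for disjoint `u, v`. -/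
def sgn (n : ℕ) (F : Type) [Field F] (u v : Finset (Fin n)) : F :=
  (-1 : F) ^ ((u ×ˢ v).filter fun q => q.2 < q.1).card

/-- Multiplication of the divided power superalgebra `O(2m,n;t)`:
`x^(α)x^u · x^(β)x^v = ε(u,v) (∏ᵢ binom (αᵢ+βᵢ) αᵢ) x^(α+β) x^(u∪v)` for disjoint
`u,v` (and `0` if `u ∩ v ≠ ∅` or `α + β ∉ A`). -/
def mul (p m n : ℕ) (t : Fin (2 * m) → ℕ) (F : Type) [Field F]
    (f g : O p m n t F) : O p m n t F := fun b =>
  ∑ α : MIdx p m t, ∑ u ∈ b.2.powerset,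
    if ∀ i, (α i : ℕ) ≤ (b.1 i : ℕ) then
      sgn n F u (b.2 \ u) * (∏ i, ((b.1 i : ℕ).choose (α i : ℕ) : F)) *
        f (α, u) *
        g (⟨fun i => (⟨(b.1 i : ℕ) - (α i : ℕ),
              lt_of_le_of_lt (Nat.sub_le _ _) (b.1 i).isLt⟩ : Fin (p ^ t i)), b.2 \ u⟩)
    else 0

/-- The superderivation `∂ᵢ` for an even index `i ∈ Y₀`. -/
def pdE (p m n : ℕ) (t : Fin (2 * m) → ℕ) (F : Type) [Field F]
    (i : Fin (2 * m)) (f : O p m n t F) : O p m n t F := fun b =>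
  if h : (b.1 i : ℕ) + 1 < p ^ t i then
    f (⟨Function.update b.1 i (⟨(b.1 i : ℕ) + 1, h⟩ : Fin (p ^ t i)), b.2⟩)
  else 0

/-- The superderivation `∂ₖ` for an odd index `k ∈ Y₁`. -/
def pdO (p m n : ℕ) (t : Fin (2 * m) → ℕ) (F : Type) [Field F]
    (k : Fin n) (f : O p m n t F) : O p m n t F := fun b =>
  if k ∈ b.2 then 0
  else ((-1 : F) ^ (b.2.filter fun j => j < k).card) * f (b.1, insert k b.2)

/-- The superderivation `∂ᵢ`, `i ∈ Y`. -/
def pd (p m n : ℕ) (t : Fin (2 * m) → ℕ) (F : Type) [Field F]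
    (i : Y m n) (f : O p m n t F) : O p m n t F :=
  match i with
  | Sum.inl i => pdE p m n t F i f
  | Sum.inr k => pdO p m n t F k f

/-- The action of `D = Σ aᵢ ∂ᵢ ∈ W` on `O`: `D(f) = Σ aᵢ ∂ᵢ(f)`. -/
def act (p m n : ℕ) (t : Fin (2 * m) → ℕ) (F : Type) [Field F]
    (D : W p m n t F) (f : O p m n t F) : O p m n t F :=
  ∑ i : Y m n, mul p m n t F (D i) (pd p m n t F i f)

/-- Projection of `f ∈ O` onto its even part (w.r.t. the ℤ₂-grading). -/
def evenO (p m n : ℕ) (t : Fin (2 * m) → ℕ) (F : Type) [Field F]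
    (f : O p m n t F) : O p m n t F := fun b => if b.2.card % 2 = 0 then f b else 0

/-- Projection of `f ∈ O` onto its odd part. -/
def oddO (p m n : ℕ) (t : Fin (2 * m) → ℕ) (F : Type) [Field F]
    (f : O p m n t F) : O p m n t F := fun b => if b.2.card % 2 = 1 then f b else 0

/-- Projection of `D ∈ W` onto its odd part (the coefficient of `∂ᵢ` is taken of
parity opposite to that of `∂ᵢ`). -/
def oddW (p m n : ℕ) (t : Fin (2 * m) → ℕ) (F : Type) [Field F]
    (D : W p m n t F) : W p m n t F := fun i =>
  match i with
  | Sum.inl j => oddO p m n t F (D (Sum.inl j))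
  | Sum.inr k => evenO p m n t F (D (Sum.inr k))

/-- The super-bracket of `W`.  On homogeneous `D = Σ aᵢ∂ᵢ`, `E = Σ bⱼ∂ⱼ` it is
`[D,E] = Σ D(bⱼ)∂ⱼ - (-1)^{p(D)p(E)} Σ E(aᵢ)∂ᵢ`, extended bilinearly; this gives the
closed formula `[D,E] = D(E) - E(D) + 2 E₁(D₁)` used here. -/
def bra (p m n : ℕ) (t : Fin (2 * m) → ℕ) (F : Type) [Field F]
    (D E : W p m n t F) : W p m n t F := fun j =>
  act p m n t F D (E j) - act p m n t F E (D j)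
    + act p m n t F (oddW p m n t F E) (oddW p m n t F D j)
    + act p m n t F (oddW p m n t F E) (oddW p m n t F D j)

/-- `τ(i)` for `i ∈ Y₀`. -/
def tauF (m : ℕ) (F : Type) [Field F] (i : Fin (2 * m)) : F :=
  if (i : ℕ) < m then 1 else -1

/-- `i ↦ i′` on `Y₀`. -/
def primeE (m : ℕ) (i : Fin (2 * m)) : Fin (2 * m) :=
  if h : (i : ℕ) < m then ⟨(i : ℕ) + m, by have := i.isLt; omega⟩
  else ⟨(i : ℕ) - m, by have := i.isLt; omega⟩

/-- The linear map `D_H : O → W`,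
`D_H(a) = Σ_{i ∈ Y} τ(i) (-1)^{μ(i) p(a)} ∂ᵢ(a) ∂ᵢ′` (on ℤ₂-homogeneous `a`,
extended linearly): the coefficient of `∂ⱼ` is `τ(j′) (-1)^{μ(j′)p(a)} ∂_{j′}(a)`. -/
def DH (p m n : ℕ) (t : Fin (2 * m) → ℕ) (F : Type) [Field F]
    (a : O p m n t F) : W p m n t F := fun j =>
  match j with
  | Sum.inl j' =>
      tauF m F (primeE m j') •
        (pdE p m n t F (primeE m j') (evenO p m n t F a)
          + pdE p m n t F (primeE m j') (oddO p m n t F a))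
  | Sum.inr k =>
      pdO p m n t F k (evenO p m n t F a) - pdO p m n t F k (oddO p m n t F a)

/-- The basis element `x^(α) x^u` of `O`. -/
def xE (p m n : ℕ) (t : Fin (2 * m) → ℕ) (F : Type) [Field F]
    (α : MIdx p m t) (u : Finset (Fin n)) : O p m n t F := fun b =>
  if b = (α, u) then 1 else 0

/-- The element `x^ω = x_{2m+1} ⋯ x_{2m+n}` of `O`. -/
def xOmega (p m n : ℕ) (t : Fin (2 * m) → ℕ) (F : Type) [Field F] : O p m n t F := fun b =>
  if (∀ i, (b.1 i : ℕ) = 0) ∧ b.2 = Finset.univ then 1 else 0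

/-- The identity `1 ∈ O`. -/
def oneO (p m n : ℕ) (t : Fin (2 * m) → ℕ) (F : Type) [Field F] : O p m n t F := fun b =>
  if (∀ i, (b.1 i : ℕ) = 0) ∧ b.2 = ∅ then 1 else 0

/-- The odd variable `xₖ ∈ O`, `k ∈ Y₁`. -/
def xOdd (p m n : ℕ) (t : Fin (2 * m) → ℕ) (F : Type) [Field F] (k : Fin n) :
    O p m n t F := fun b =>
  if (∀ i, (b.1 i : ℕ) = 0) ∧ b.2 = {k} then 1 else 0

/-- `Γ′ = Σ_{r ∈ Y₁} x_r ∂_r ∈ 𝒲`. -/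
def GammaP (p m n : ℕ) (t : Fin (2 * m) → ℕ) (F : Type) [Field F] : W p m n t F := fun j =>
  match j with
  | Sum.inl _ => 0
  | Sum.inr k => xOdd p m n t F k

/-- The element `∂_r ∈ W` for `r ∈ Y₀`. -/
def delW (p m n : ℕ) (t : Fin (2 * m) → ℕ) (F : Type) [Field F] (r : Fin (2 * m)) :
    W p m n t F := fun j =>
  if j = Sum.inl r then oneO p m n t F else 0

/-- `𝒲`, the even part of `W(2m,n;t)`: the term `a ∂ⱼ` with `a = x^(α)x^u` is even iff
`|u| + μ(j)` is even. -/
def calW (p m n : ℕ) (t : Fin (2 * m) → ℕ) (F : Type) [Field F] : Set (W p m n t F) :=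
  {D | ∀ (j : Y m n) (b : BIdx p m n t),
    ¬ ((b.2.card + (match j with | Sum.inl _ => 0 | Sum.inr _ => 1)) % 2 = 0) → D j b = 0}

/-- The predicate `α = π`, i.e. `αᵢ = p ^ tᵢ - 1` for all `i`. -/
def isPi (p m : ℕ) (t : Fin (2 * m) → ℕ) (α : MIdx p m t) : Prop :=
  ∀ i, (α i : ℕ) = p ^ t i - 1

/-- The predicate `α = q εᵢ`. -/
def isSingle (p m : ℕ) (t : Fin (2 * m) → ℕ) (α : MIdx p m t) (i : Fin (2 * m))
    (q : ℕ) : Prop :=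
  (α i : ℕ) = q ∧ ∀ j, j ≠ i → (α j : ℕ) = 0

/-- `𝓗`, the even part of the Hamiltonian superalgebra `H(2m,n;t)`:
the span of the `D_H(x^(α)x^u)` with `|u|` even and `(α,u) ≠ (π,ω)`. -/
def calH (p m n : ℕ) (t : Fin (2 * m) → ℕ) (F : Type) [Field F] :
    Submodule F (W p m n t F) :=
  Submodule.span F {D | ∃ (α : MIdx p m t) (u : Finset (Fin n)),
    Even u.card ∧ ¬(isPi p m t α ∧ u = Finset.univ) ∧ D = DH p m n t F (xE p m n t F α u)}

/-- The ideal `𝔑` of `𝓗`: the span of the `D_H(x^(α)x^u)` with `|u|` even,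
`(α,u) ≠ (π,ω)` and `(α,u) ≠ (π,∅)`. -/
def frakN (p m n : ℕ) (t : Fin (2 * m) → ℕ) (F : Type) [Field F] :
    Submodule F (W p m n t F) :=
  Submodule.span F {D | ∃ (α : MIdx p m t) (u : Finset (Fin n)),
    Even u.card ∧ ¬(isPi p m t α ∧ u = Finset.univ) ∧ ¬(isPi p m t α ∧ u = ∅) ∧
    D = DH p m n t F (xE p m n t F α u)}

/-- The ℤ-degree of the basis element `x^(α)x^u ∈ O`. -/
def degB (p m n : ℕ) (t : Fin (2 * m) → ℕ) (b : BIdx p m n t) : ℕ :=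
  (∑ i, (b.1 i : ℕ)) + b.2.card

/-- `D ∈ W_[k]`: all coefficients of `D` are concentrated in `O`-degree `k + 1`. -/
def inDeg (p m n : ℕ) (t : Fin (2 * m) → ℕ) (F : Type) [Field F]
    (k : ℤ) (D : W p m n t F) : Prop :=
  ∀ (j : Y m n) (b : BIdx p m n t), (degB p m n t b : ℤ) - 1 ≠ k → D j b = 0

/-- `D` lies in the top `W_[-1] ⊕ W_[0]` (so the order of its coefficients is `≤ 1`). -/
def inTop (p m n : ℕ) (t : Fin (2 * m) → ℕ) (F : Type) [Field F]
    (D : W p m n t F) : Prop :=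
  ∀ (j : Y m n) (b : BIdx p m n t),
    (degB p m n t b : ℤ) ≠ 0 → (degB p m n t b : ℤ) ≠ 1 → D j b = 0

/-- `φ : S → W` is `F`-linear. -/
def IsLinearOn (p m n : ℕ) (t : Fin (2 * m) → ℕ) (F : Type) [Field F]
    (S : Submodule F (W p m n t F)) (φ : S → W p m n t F) : Prop :=
  (∀ x y : S, φ (x + y) = φ x + φ y) ∧ ∀ (c : F) (x : S), φ (c • x) = c • φ x

/-- `φ ∈ Der(S, 𝒲)`: an `F`-linear map `S → 𝒲 ⊆ W` with
`φ([x,y]) = [x, φ(y)] - [y, φ(x)]` whenever `x, y, [x,y] ∈ S`. -/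
def IsDerOn (p m n : ℕ) (t : Fin (2 * m) → ℕ) (F : Type) [Field F]
    (S : Submodule F (W p m n t F)) (φ : S → W p m n t F) : Prop :=
  IsLinearOn p m n t F S φ ∧ (∀ x : S, φ x ∈ calW p m n t F) ∧
  ∀ (x y : S) (h : bra p m n t F (↑x) (↑y) ∈ S),
    φ ⟨bra p m n t F (↑x) (↑y), h⟩ =
      bra p m n t F (↑x) (φ y) - bra p m n t F (↑y) (φ x)

/-- `φ ∈ Der_[r](S, W)`: `φ` is ℤ-homogeneous of ℤ-degree `r`, i.e.
`φ(S_[k]) ⊆ W_[r+k]` for all `k`. -/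
def IsHomogOn (p m n : ℕ) (t : Fin (2 * m) → ℕ) (F : Type) [Field F]
    (S : Submodule F (W p m n t F)) (r : ℤ) (φ : S → W p m n t F) : Prop :=
  ∀ (k : ℤ) (x : S), inDeg p m n t F k (↑x) → inDeg p m n t F (r + k) (φ x)

/-- The exceptional map `Φ⁽q⁾ᵢ : 𝓗 → 𝒲`, `D_H(f) ↦ ∂ᵢ^(p^q)(f) D_H(x^ω)`, extended to
`W` using that the `∂ᵢ′`-coefficient of `D_H(f)` is `τ(i) ∂ᵢ(f)` for even `f`. -/
def PhiW (p m n : ℕ) (t : Fin (2 * m) → ℕ) (F : Type) [Field F]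
    (i : Fin (2 * m)) (q : ℕ) (D : W p m n t F) : W p m n t F := fun j =>
  mul p m n t F
    ((pdE p m n t F i)^[p ^ q - 1] (tauF m F i • D (Sum.inl (primeE m i))))
    (DH p m n t F (xOmega p m n t F) j)

/-- The exceptional map `Θ⁽q⁾ᵢ : 𝓗 → 𝒲`,
`D_H(f) ↦ x^ω D_H(∂ᵢ^(p^q)(f)) = x^ω (ad ∂ᵢ)^(p^q)(D_H(f))`. -/
def ThetaW (p m n : ℕ) (t : Fin (2 * m) → ℕ) (F : Type) [Field F]
    (i : Fin (2 * m)) (q : ℕ) (D : W p m n t F) : W p m n t F := fun j =>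
  mul p m n t F (xOmega p m n t F) ((pdE p m n t F i)^[p ^ q] (D j))

/-- The exceptional map `Ψ⁽ⁱ⁾ : 𝓗 → 𝒲`, `D_H(f) ↦ ∂ᵢ∂ᵢ′(f) D_H(x^ω)`. -/
def PsiW (p m n : ℕ) (t : Fin (2 * m) → ℕ) (F : Type) [Field F]
    (i : Fin (2 * m)) (D : W p m n t F) : W p m n t F := fun j =>
  mul p m n t F
    (pdE p m n t F (primeE m i) (tauF m F i • D (Sum.inl (primeE m i))))
    (DH p m n t F (xOmega p m n t F) j)

/-- `(ad ∂_r)^e : W → W`. -/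
def adPow (p m n : ℕ) (t : Fin (2 * m) → ℕ) (F : Type) [Field F]
    (r : Fin (2 * m)) (e : ℕ) : W p m n t F → W p m n t F :=
  (fun D => bra p m n t F (delW p m n t F r) D)^[e]

section Aux
variable {p m n : ℕ} {t : Fin (2 * m) → ℕ} {F : Type} [Field F]

/-- zero multi-index -/
def midx0 (H : ∀ i, 3 < p ^ t i) : MIdx p m t := fun j => ⟨0, by have := H j; omega⟩

/-- top multi-index π -/
def piIdx (H : ∀ i, 3 < p ^ t i) : MIdx p m t :=
  fun j => ⟨p ^ t j - 1, by have := H j; omega⟩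

/-- ε_i -/
def eps (H : ∀ i, 3 < p ^ t i) (i : Fin (2 * m)) : MIdx p m t :=
  fun j => if j = i then ⟨1, by have := H j; omega⟩ else ⟨0, by have := H j; omega⟩

/-- 2ε_i -/
def eps2 (H : ∀ i, 3 < p ^ t i) (i : Fin (2 * m)) : MIdx p m t :=
  fun j => if j = i then ⟨2, by have := H j; omega⟩ else ⟨0, by have := H j; omega⟩

/-- decrement α at r -/
def dec (α : MIdx p m t) (r : Fin (2 * m)) : MIdx p m t :=
  fun j => if h : j = r then ⟨(α r : ℕ) - 1, by rw [h]; have := (α r).isLt; omega⟩ else α j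

/-- entrywise truncated subtraction -/
def msub (β α : MIdx p m t) : MIdx p m t :=
  fun i => ⟨(β i : ℕ) - (α i : ℕ), lt_of_le_of_lt (Nat.sub_le _ _) (β i).isLt⟩

lemma midx0_val (H : ∀ i, 3 < p ^ t i) (j) : ((midx0 (p := p) H j : ℕ)) = 0 := rfl
lemma piIdx_val (H : ∀ i, 3 < p ^ t i) (j) : ((piIdx (p := p) H j : ℕ)) = p ^ t j - 1 := rfl
lemma eps_val (H : ∀ i, 3 < p ^ t i) (i j) :
    ((eps H i j : ℕ)) = if j = i then 1 else 0 := by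
  unfold eps; split <;> rfl
lemma eps2_val (H : ∀ i, 3 < p ^ t i) (i j) :
    ((eps2 H i j : ℕ)) = if j = i then 2 else 0 := by
  unfold eps2; split <;> rfl
lemma dec_val (α : MIdx p m t) (r j) :
    ((dec α r j : ℕ)) = if j = r then (α r : ℕ) - 1 else (α j : ℕ) := by
  unfold dec; split <;> rfl
lemma msub_val (β α : MIdx p m t) (j) : ((msub β α j : ℕ)) = (β j : ℕ) - (α j : ℕ) := rfl

lemma primeE_val (i : Fin (2 * m)) :
    ((primeE m i : Fin (2 * m)) : ℕ) = if (i : ℕ) < m then (i : ℕ) + m else (i : ℕ) - m := by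
  unfold primeE; split <;> rfl

lemma primeE_primeE (i : Fin (2 * m)) : primeE m (primeE m i) = i := by
  apply Fin.ext
  rw [primeE_val, primeE_val]
  have := i.isLt
  split_ifs <;> omega

lemma tauF_primeE (hm : 0 < m) (i : Fin (2 * m)) :
    tauF m F (primeE m i) = - tauF m F i := by
  unfold tauF
  rw [primeE_val]
  have := i.isLt
  split_ifs <;> first | omega | ring

lemma tauF_sq (i : Fin (2 * m)) : tauF m F i * tauF m F i = 1 := by
  unfold tauF; split_ifs <;> ring

lemma tauF_ne_zero (i : Fin (2 * m)) : tauF m F i ≠ 0 := by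
  unfold tauF; split_ifs <;> simp

lemma primeE_ne (hm : 0 < m) (i : Fin (2 * m)) : primeE m i ≠ i := by
  intro h
  have hv := congrArg (Fin.val) h
  rw [primeE_val] at hv
  have hlt := i.isLt
  split_ifs at hv <;> omega

lemma dec_comm (α : MIdx p m t) (r s : Fin (2 * m)) : dec (dec α r) s = dec (dec α s) r := by
  funext j
  apply Fin.ext
  simp only [dec_val]
  split_ifs <;> (try subst_vars) <;> simp_all <;> omega

lemma sgn_empty_left (v : Finset (Fin n)) : sgn n F ∅ v = 1 := by
  simp [sgn]

lemma sgn_empty_right (u : Finset (Fin n)) : sgn n F u ∅ = 1 := by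
  simp [sgn]

end Aux
section Aux2
variable {p m n : ℕ} {t : Fin (2 * m) → ℕ} {F : Type} [Field F]

lemma xE_apply (α : MIdx p m t) (u : Finset (Fin n)) (b : BIdx p m n t) :
    xE p m n t F α u b = if b = (α, u) then 1 else 0 := rfl

lemma pdE_xE (r : Fin (2 * m)) (α : MIdx p m t) (u : Finset (Fin n)) :
    pdE p m n t F r (xE p m n t F α u) =
      if 1 ≤ (α r : ℕ) then xE p m n t F (dec α r) u else 0 := by
  funext b
  rcases b with ⟨β, w⟩
  by_cases hα : 1 ≤ (α r : ℕ)
  · rw [if_pos hα]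
    by_cases hb : β = dec α r ∧ w = u
    · obtain ⟨h1, h2⟩ := hb; subst h1; subst h2
      have hαlt := (α r).isLt
      have hlt : ((dec α r) r : ℕ) + 1 < p ^ t r := by
        simp [dec_val]; omega
      unfold pdE
      rw [dif_pos hlt]
      have hupd : Function.update (dec α r) r ⟨((dec α r) r : ℕ) + 1, hlt⟩ = α := by
        funext j
        by_cases hj : j = r
        · subst hj; rw [Function.update_self]; apply Fin.ext
          simp [dec_val]
          omega
        · rw [Function.update_of_ne hj]; apply Fin.ext; rw [dec_val, if_neg hj]
      rw [xE_apply, xE_apply, hupd]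
      simp
    · rw [xE_apply, if_neg (by intro hc; apply hb; rw [Prod.mk.injEq] at hc; exact hc)]
      unfold pdE
      split_ifs with h
      · rw [xE_apply, if_neg]
        intro hc
        rw [Prod.mk.injEq] at hc
        obtain ⟨hc1, hc2⟩ := hc
        apply hb
        refine ⟨?_, hc2⟩
        funext j
        apply Fin.ext
        by_cases hj : j = r
        · subst hj
          have : ((β j : ℕ) + 1) = (α j : ℕ) := by
            have := congrArg (fun f => ((f j : Fin (p ^ t j)) : ℕ)) hc1
            simpa [Function.update_self] using this
          simp [dec_val]; omega
        · have := congrArg (fun f => ((f j : Fin (p ^ t j)) : ℕ)) hc1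
          simp only [dec_val, if_neg hj]
          simp only [Function.update_of_ne hj] at this
          exact this.symm ▸ rfl
      · rfl
  · rw [if_neg hα]
    show _ = (0 : F)
    unfold pdE
    split_ifs with h
    · rw [xE_apply, if_neg]
      intro hc
      rw [Prod.mk.injEq] at hc
      have := congrArg (fun f => ((f r : Fin (p ^ t r)) : ℕ)) hc.1
      simp only [Function.update_self] at this
      omega
    · rfl

lemma pdO_xE (s : Fin n) (α : MIdx p m t) (u : Finset (Fin n)) :
    pdO p m n t F s (xE p m n t F α u) =
      if s ∈ u then
        ((-1 : F) ^ (((u.erase s).filter (fun j => j < s)).card)) • xE p m n t F α (u.erase s)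
      else 0 := by
  funext b
  rcases b with ⟨β, w⟩
  unfold pdO
  by_cases hs : s ∈ u
  · rw [if_pos hs]
    by_cases hw : s ∈ w
    · rw [if_pos hw]
      rw [Pi.smul_apply, xE_apply, if_neg, smul_zero]
      intro hc
      rw [Prod.mk.injEq] at hc
      exact (Finset.notMem_erase s u) (hc.2 ▸ hw)
    · rw [if_neg hw]
      by_cases hb : β = α ∧ w = u.erase s
      · obtain ⟨h1, h2⟩ := hb; subst h1; subst h2
        rw [xE_apply, if_pos, Pi.smul_apply, xE_apply, if_pos rfl]
        · simp [smul_eq_mul]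
        · rw [Prod.mk.injEq]
          exact ⟨rfl, Finset.insert_erase hs⟩
      · rw [xE_apply, if_neg, Pi.smul_apply, xE_apply, if_neg, smul_zero, mul_zero]
        · intro hc; rw [Prod.mk.injEq] at hc; exact hb hc
        · intro hc
          rw [Prod.mk.injEq] at hc
          apply hb
          refine ⟨hc.1, ?_⟩
          rw [← hc.2, Finset.erase_insert hw]
  · rw [if_neg hs]
    by_cases hw : s ∈ w
    · rw [if_pos hw]; rfl
    · rw [if_neg hw, xE_apply, if_neg, mul_zero]
      · rfl
      · intro hc
        rw [Prod.mk.injEq] at hc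
        exact hs (hc.2 ▸ Finset.mem_insert_self s w)

lemma evenO_xE_even {u : Finset (Fin n)} (h : Even u.card) (α : MIdx p m t) :
    evenO p m n t F (xE p m n t F α u) = xE p m n t F α u := by
  funext b
  unfold evenO
  by_cases hb : b = (α, u)
  · subst hb; simp [Nat.even_iff.mp h]
  · rw [xE_apply, if_neg hb, ite_self]

lemma oddO_xE_even {u : Finset (Fin n)} (h : Even u.card) (α : MIdx p m t) :
    oddO p m n t F (xE p m n t F α u) = 0 := by
  funext b
  unfold oddO
  by_cases hb : b = (α, u)
  · subst hb; simp [Nat.even_iff.mp h]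
  · rw [xE_apply, if_neg hb, ite_self]; rfl

lemma pdE_zero (r : Fin (2 * m)) : pdE p m n t F r (0 : O p m n t F) = 0 := by
  funext b; unfold pdE; split <;> rfl

lemma pdO_zero (s : Fin n) : pdO p m n t F s (0 : O p m n t F) = 0 := by
  funext b; unfold pdO; split
  · rfl
  · simp

lemma pd_zero (i : Y m n) : pd p m n t F i (0 : O p m n t F) = 0 := by
  cases i
  · exact pdE_zero _
  · exact pdO_zero _

lemma pdE_smul (r : Fin (2 * m)) (c : F) (f : O p m n t F) :
    pdE p m n t F r (c • f) = c • pdE p m n t F r f := by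
  funext b
  rw [Pi.smul_apply]
  unfold pdE
  split_ifs with h
  · rfl
  · simp

lemma pdO_smul (s : Fin n) (c : F) (f : O p m n t F) :
    pdO p m n t F s (c • f) = c • pdO p m n t F s f := by
  funext b
  rw [Pi.smul_apply]
  unfold pdO
  split_ifs with h
  · simp
  · rw [Pi.smul_apply]
    simp only [smul_eq_mul]
    ring

lemma mul_zero_right (f : O p m n t F) : mul p m n t F f 0 = 0 := by
  funext b; unfold mul; simp

lemma mul_zero_left (g : O p m n t F) : mul p m n t F (0 : O p m n t F) g = 0 := by
  funext b; unfold mul; simp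

lemma mul_smul_left (c : F) (f g : O p m n t F) :
    mul p m n t F (c • f) g = c • mul p m n t F f g := by
  funext b
  unfold mul
  rw [Pi.smul_apply, smul_eq_mul, Finset.mul_sum]
  refine Finset.sum_congr rfl fun α _ => ?_
  rw [Finset.mul_sum]
  refine Finset.sum_congr rfl fun u _ => ?_
  split_ifs
  · simp only [Pi.smul_apply, smul_eq_mul]; ring
  · ring

lemma mul_smul_right (c : F) (f g : O p m n t F) :
    mul p m n t F f (c • g) = c • mul p m n t F f g := by
  funext b
  unfold mul
  rw [Pi.smul_apply, smul_eq_mul, Finset.mul_sum]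
  refine Finset.sum_congr rfl fun α _ => ?_
  rw [Finset.mul_sum]
  refine Finset.sum_congr rfl fun u _ => ?_
  split_ifs
  · simp only [Pi.smul_apply, smul_eq_mul]; ring
  · ring

lemma act_split (D : W p m n t F) (f : O p m n t F) :
    act p m n t F D f =
      (∑ r, mul p m n t F (D (Sum.inl r)) (pdE p m n t F r f)) +
      (∑ s, mul p m n t F (D (Sum.inr s)) (pdO p m n t F s f)) := by
  unfold act
  rw [Fintype.sum_sum_type]
  rfl

lemma act_zero_right (D : W p m n t F) : act p m n t F D 0 = 0 := by
  unfold act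
  rw [Finset.sum_eq_zero]
  intro i _
  rw [pd_zero, mul_zero_right]

lemma act_zero_left (f : O p m n t F) : act p m n t F (0 : W p m n t F) f = 0 := by
  unfold act
  rw [Finset.sum_eq_zero]
  intro i _
  exact mul_zero_left _

lemma oddW_zero : oddW p m n t F 0 = 0 := by
  funext j
  cases j <;> (funext b; unfold oddW oddO evenO; simp)

lemma oddW_of_calW {E : W p m n t F} (hE : E ∈ calW p m n t F) : oddW p m n t F E = 0 := by
  funext j
  cases j with
  | inl r =>
    funext b
    show oddO p m n t F (E (Sum.inl r)) b = 0
    unfold oddO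
    split_ifs with h
    · exact hE (Sum.inl r) b (by simp; omega)
    · rfl
  | inr s =>
    funext b
    show evenO p m n t F (E (Sum.inr s)) b = 0
    unfold evenO
    split_ifs with h
    · exact hE (Sum.inr s) b (by simp; omega)
    · rfl

lemma bra_zero_right (D : W p m n t F) : bra p m n t F D 0 = 0 := by
  funext j
  unfold bra
  show act p m n t F D ((0 : W p m n t F) j) - _ + _ + _ = _
  have h0 : (0 : W p m n t F) j = 0 := rfl
  rw [h0, act_zero_right, act_zero_left, oddW_zero, act_zero_left]
  simp

end Aux2
section Aux3
variable {p m n : ℕ} {t : Fin (2 * m) → ℕ} {F : Type} [Field F]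

lemma mul_xE_left (β : MIdx p m t) (v : Finset (Fin n)) (g : O p m n t F) (b : BIdx p m n t) :
    mul p m n t F (xE p m n t F β v) g b =
    if (∀ i, (β i : ℕ) ≤ (b.1 i : ℕ)) ∧ v ⊆ b.2 then
      sgn n F v (b.2 \ v) * (∏ i, ((b.1 i : ℕ).choose (β i : ℕ) : F)) *
        g (msub b.1 β, b.2 \ v)
    else 0 := by
  set S : F := if (∀ i, (β i : ℕ) ≤ (b.1 i : ℕ)) ∧ v ⊆ b.2 then
      sgn n F v (b.2 \ v) * (∏ i, ((b.1 i : ℕ).choose (β i : ℕ) : F)) *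
        g (msub b.1 β, b.2 \ v)
    else 0 with hS
  unfold mul
  have step : (∑ α : MIdx p m t, ∑ u ∈ b.2.powerset,
      if ∀ i, (α i : ℕ) ≤ (b.1 i : ℕ) then
        sgn n F u (b.2 \ u) * (∏ i, ((b.1 i : ℕ).choose (α i : ℕ) : F)) *
          xE p m n t F β v (α, u) *
          g (⟨fun i => (⟨(b.1 i : ℕ) - (α i : ℕ),
                lt_of_le_of_lt (Nat.sub_le _ _) (b.1 i).isLt⟩ : Fin (p ^ t i)), b.2 \ u⟩)
      else 0)
      = ∑ α : MIdx p m t, ∑ u ∈ b.2.powerset,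
          (if α = β then (if u = v then S else 0) else 0) := by
    refine Finset.sum_congr rfl fun α _ => Finset.sum_congr rfl fun u hu => ?_
    by_cases h1 : α = β
    · by_cases h2 : u = v
      · subst h1; subst h2
        have hxe : xE p m n t F α u (α, u) = 1 := by rw [xE_apply, if_pos rfl]
        rw [hxe, mul_one, if_pos rfl, if_pos rfl, hS]
        have hsub : u ⊆ b.2 := Finset.mem_powerset.mp hu
        by_cases h3 : ∀ i, (α i : ℕ) ≤ (b.1 i : ℕ)
        · rw [if_pos h3, if_pos ⟨h3, hsub⟩]
          rfl
        · rw [if_neg h3, if_neg (by tauto)]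
      · have hxe : xE p m n t F β v (α, u) = 0 := by
          rw [xE_apply, if_neg]
          intro hc; rw [Prod.mk.injEq] at hc; exact h2 hc.2
        rw [hxe, mul_zero, zero_mul, ite_self, if_pos h1, if_neg h2]
    · have hxe : xE p m n t F β v (α, u) = 0 := by
        rw [xE_apply, if_neg]
        intro hc; rw [Prod.mk.injEq] at hc; exact h1 hc.1
      rw [hxe, mul_zero, zero_mul, ite_self, if_neg h1]
  rw [step]
  have inner : ∀ α : MIdx p m t,
      (∑ u ∈ b.2.powerset, (if α = β then (if u = v then S else 0) else 0))
      = if α = β then (if v ⊆ b.2 then S else 0) else 0 := by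
    intro α
    by_cases hα : α = β
    · simp only [if_pos hα]
      rw [Finset.sum_ite_eq' b.2.powerset v (fun _ => S)]
      simp only [Finset.mem_powerset]
    · simp [hα]
  rw [Finset.sum_congr rfl (fun α _ => inner α),
    Finset.sum_ite_eq' Finset.univ β (fun _ => if v ⊆ b.2 then S else 0),
    if_pos (Finset.mem_univ β), hS]
  split_ifs <;> tauto

lemma mul_xE_right (γ : MIdx p m t) (v : Finset (Fin n)) (f : O p m n t F) (b : BIdx p m n t) :
    mul p m n t F f (xE p m n t F γ v) b =
    if (∀ i, (γ i : ℕ) ≤ (b.1 i : ℕ)) ∧ v ⊆ b.2 then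
      sgn n F (b.2 \ v) v * (∏ i, ((b.1 i : ℕ).choose ((b.1 i : ℕ) - (γ i : ℕ)) : F)) *
        f (msub b.1 γ, b.2 \ v)
    else 0 := by
  set S : F := if (∀ i, (γ i : ℕ) ≤ (b.1 i : ℕ)) ∧ v ⊆ b.2 then
      sgn n F (b.2 \ v) v * (∏ i, ((b.1 i : ℕ).choose ((b.1 i : ℕ) - (γ i : ℕ)) : F)) *
        f (msub b.1 γ, b.2 \ v)
    else 0 with hS
  unfold mul
  have step : (∑ α : MIdx p m t, ∑ u ∈ b.2.powerset,
      if ∀ i, (α i : ℕ) ≤ (b.1 i : ℕ) then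
        sgn n F u (b.2 \ u) * (∏ i, ((b.1 i : ℕ).choose (α i : ℕ) : F)) *
          f (α, u) *
          xE p m n t F γ v (⟨fun i => (⟨(b.1 i : ℕ) - (α i : ℕ),
                lt_of_le_of_lt (Nat.sub_le _ _) (b.1 i).isLt⟩ : Fin (p ^ t i)), b.2 \ u⟩)
      else 0)
      = ∑ α : MIdx p m t, ∑ u ∈ b.2.powerset,
          (if α = msub b.1 γ then (if u = b.2 \ v then S else 0) else 0) := by
    refine Finset.sum_congr rfl fun α _ => Finset.sum_congr rfl fun u hu => ?_
    have husub : u ⊆ b.2 := Finset.mem_powerset.mp hu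
    by_cases h1 : α = msub b.1 γ
    · by_cases h2 : u = b.2 \ v
      · subst h1; subst h2
        have hcond : ∀ i, ((msub b.1 γ) i : ℕ) ≤ (b.1 i : ℕ) := fun i => Nat.sub_le _ _
        rw [if_pos hcond, if_pos rfl, if_pos rfl, hS]
        by_cases h3 : (∀ i, (γ i : ℕ) ≤ (b.1 i : ℕ)) ∧ v ⊆ b.2
        · have e2 : b.2 \ (b.2 \ v) = v := by
            rw [Finset.sdiff_sdiff_self_left, Finset.inter_eq_right.mpr h3.2]
          have hxe : xE p m n t F γ v
              (⟨fun i => (⟨(b.1 i : ℕ) - ((msub b.1 γ) i : ℕ),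
                lt_of_le_of_lt (Nat.sub_le _ _) (b.1 i).isLt⟩ : Fin (p ^ t i)),
                b.2 \ (b.2 \ v)⟩) = 1 := by
            rw [xE_apply, if_pos]
            rw [Prod.mk.injEq]
            refine ⟨funext fun i => Fin.ext ?_, e2⟩
            show (b.1 i : ℕ) - ((b.1 i : ℕ) - (γ i : ℕ)) = (γ i : ℕ)
            have := h3.1 i
            omega
          rw [hxe, mul_one, if_pos h3, e2]
          rfl
        · have hxe : xE p m n t F γ v
              (⟨fun i => (⟨(b.1 i : ℕ) - ((msub b.1 γ) i : ℕ),
                lt_of_le_of_lt (Nat.sub_le _ _) (b.1 i).isLt⟩ : Fin (p ^ t i)),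
                b.2 \ (b.2 \ v)⟩) = 0 := by
            rw [xE_apply, if_neg]
            intro hc
            rw [Prod.mk.injEq] at hc
            apply h3
            constructor
            · intro i
              have := congrArg (fun h => ((h i : Fin (p ^ t i)) : ℕ)) hc.1
              simp only at this
              omega
            · rw [← hc.2]
              exact Finset.sdiff_subset
          rw [hxe, mul_zero, if_neg h3]
      · have hxe : xE p m n t F γ v
            (⟨fun i => (⟨(b.1 i : ℕ) - (α i : ℕ),
              lt_of_le_of_lt (Nat.sub_le _ _) (b.1 i).isLt⟩ : Fin (p ^ t i)),
              b.2 \ u⟩) = 0 := by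
          rw [xE_apply, if_neg]
          intro hc
          rw [Prod.mk.injEq] at hc
          apply h2
          rw [← hc.2, Finset.sdiff_sdiff_self_left, Finset.inter_eq_right.mpr husub]
        rw [hxe, mul_zero, ite_self, if_pos h1, if_neg h2]
    · have hxe : ∀ hcond : ∀ i, (α i : ℕ) ≤ (b.1 i : ℕ), xE p m n t F γ v
          (⟨fun i => (⟨(b.1 i : ℕ) - (α i : ℕ),
            lt_of_le_of_lt (Nat.sub_le _ _) (b.1 i).isLt⟩ : Fin (p ^ t i)),
            b.2 \ u⟩) = 0 := by
        intro hcond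
        rw [xE_apply, if_neg]
        intro hc
        rw [Prod.mk.injEq] at hc
        apply h1
        funext i
        apply Fin.ext
        have := congrArg (fun h => ((h i : Fin (p ^ t i)) : ℕ)) hc.1
        simp only at this
        show (α i : ℕ) = (b.1 i : ℕ) - (γ i : ℕ)
        have hc2 := hcond i
        omega
      rw [if_neg h1]
      split_ifs with hcond
      · rw [hxe hcond, mul_zero]
      · rfl
  rw [step]
  have inner : ∀ α : MIdx p m t,
      (∑ u ∈ b.2.powerset, (if α = msub b.1 γ then (if u = b.2 \ v then S else 0) else 0))
      = if α = msub b.1 γ then S else 0 := by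
    intro α
    by_cases hα : α = msub b.1 γ
    · simp only [if_pos hα]
      rw [Finset.sum_ite_eq' b.2.powerset (b.2 \ v) (fun _ => S),
        if_pos (Finset.mem_powerset.mpr Finset.sdiff_subset)]
    · simp [hα]
  rw [Finset.sum_congr rfl (fun α _ => inner α),
    Finset.sum_ite_eq' Finset.univ (msub b.1 γ) (fun _ => S),
    if_pos (Finset.mem_univ _)]

end Aux3
section Aux4
variable {p m n : ℕ} {t : Fin (2 * m) → ℕ} {F : Type} [Field F]

lemma msub_midx0 (H : ∀ i, 3 < p ^ t i) (β : MIdx p m t) : msub β (midx0 H) = β := by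
  funext j; apply Fin.ext; simp [msub_val, midx0_val]

lemma dec_eps (H : ∀ i, 3 < p ^ t i) (i : Fin (2 * m)) : dec (eps H i) i = midx0 H := by
  funext j; apply Fin.ext; simp [dec_val, eps_val, midx0_val]

lemma dec_eps2 (H : ∀ i, 3 < p ^ t i) (i : Fin (2 * m)) : dec (eps2 H i) i = eps H i := by
  funext j; apply Fin.ext; simp [dec_val, eps2_val, eps_val]
  split_ifs <;> simp_all

lemma pdE_eps (H : ∀ i, 3 < p ^ t i) (i : Fin (2 * m)) (v : Finset (Fin n)) :
    pdE p m n t F i (xE p m n t F (eps H i) v) = xE p m n t F (midx0 H) v := by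
  rw [pdE_xE, if_pos (by simp [eps_val]), dec_eps]

lemma pdE_eps_ne (H : ∀ i, 3 < p ^ t i) {i r : Fin (2 * m)} (hr : r ≠ i) (v : Finset (Fin n)) :
    pdE p m n t F r (xE p m n t F (eps H i) v) = 0 := by
  rw [pdE_xE, if_neg]; simp [eps_val, hr]

lemma pdE_eps2 (H : ∀ i, 3 < p ^ t i) (i : Fin (2 * m)) (v : Finset (Fin n)) :
    pdE p m n t F i (xE p m n t F (eps2 H i) v) = xE p m n t F (eps H i) v := by
  rw [pdE_xE, if_pos (by simp [eps2_val]), dec_eps2]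

lemma pdE_eps2_ne (H : ∀ i, 3 < p ^ t i) {i r : Fin (2 * m)} (hr : r ≠ i) (v : Finset (Fin n)) :
    pdE p m n t F r (xE p m n t F (eps2 H i) v) = 0 := by
  rw [pdE_xE, if_neg]; simp [eps2_val, hr]

lemma pdE_midx0 (H : ∀ i, 3 < p ^ t i) (r : Fin (2 * m)) (v : Finset (Fin n)) :
    pdE p m n t F r (xE p m n t F (midx0 H) v) = 0 := by
  rw [pdE_xE, if_neg]; simp [midx0_val]

lemma pdE_pi (H : ∀ i, 3 < p ^ t i) (r : Fin (2 * m)) (v : Finset (Fin n)) :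
    pdE p m n t F r (xE p m n t F (piIdx H) v) = xE p m n t F (dec (piIdx H) r) v := by
  rw [pdE_xE, if_pos]; have := H r; simp [piIdx_val]; omega

lemma pdE_decpi (H : ∀ i, 3 < p ^ t i) (r r' : Fin (2 * m)) (v : Finset (Fin n)) :
    pdE p m n t F r (xE p m n t F (dec (piIdx H) r') v) =
      xE p m n t F (dec (dec (piIdx H) r') r) v := by
  rw [pdE_xE, if_pos]
  have := H r; have := H r'
  simp only [dec_val, piIdx_val]
  split_ifs <;> omega

lemma pdO_empty (s : Fin n) (β : MIdx p m t) :
    pdO p m n t F s (xE p m n t F β ∅) = 0 := by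
  rw [pdO_xE, if_neg (Finset.notMem_empty s)]

lemma pdO_single (l : Fin n) (β : MIdx p m t) :
    pdO p m n t F l (xE p m n t F β {l}) = xE p m n t F β ∅ := by
  rw [pdO_xE, if_pos (Finset.mem_singleton_self l)]
  simp

lemma pdO_single_ne {s l : Fin n} (hs : s ≠ l) (β : MIdx p m t) :
    pdO p m n t F s (xE p m n t F β {l}) = 0 := by
  rw [pdO_xE, if_neg]; simp [hs]

lemma pair_erase_left {k l : Fin n} (hkl : k ≠ l) : ({k, l} : Finset (Fin n)).erase k = {l} := by
  rw [Finset.erase_insert]; simp [hkl]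

lemma pair_erase_right {k l : Fin n} (hkl : k ≠ l) : ({k, l} : Finset (Fin n)).erase l = {k} := by
  rw [Finset.pair_comm, Finset.erase_insert]; simp [hkl.symm]

lemma pdO_pair_left {k l : Fin n} (hkl : k ≠ l) (β : MIdx p m t) :
    pdO p m n t F k (xE p m n t F β {k, l}) =
      ((-1 : F) ^ (({l} : Finset (Fin n)).filter (fun j => j < k)).card) •
        xE p m n t F β {l} := by
  rw [pdO_xE, if_pos (by simp), pair_erase_left hkl]

lemma pdO_pair_right {k l : Fin n} (hkl : k ≠ l) (β : MIdx p m t) :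
    pdO p m n t F l (xE p m n t F β {k, l}) =
      ((-1 : F) ^ (({k} : Finset (Fin n)).filter (fun j => j < l)).card) •
        xE p m n t F β {k} := by
  rw [pdO_xE, if_pos (by simp), pair_erase_right hkl]

lemma pdO_pair_ne {k l s : Fin n} (h1 : s ≠ k) (h2 : s ≠ l) (β : MIdx p m t) :
    pdO p m n t F s (xE p m n t F β {k, l}) = 0 := by
  rw [pdO_xE, if_neg]; simp [h1, h2]

lemma pd_smul (i : Y m n) (c : F) (f : O p m n t F) :
    pd p m n t F i (c • f) = c • pd p m n t F i f := by
  cases i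
  · exact pdE_smul _ _ _
  · exact pdO_smul _ _ _

lemma act_smul_right (D : W p m n t F) (c : F) (g : O p m n t F) :
    act p m n t F D (c • g) = c • act p m n t F D g := by
  unfold act
  rw [Finset.smul_sum]
  refine Finset.sum_congr rfl fun i _ => ?_
  rw [pd_smul, mul_smul_right]

-- act collapse helpers
lemma act_eq_single_inl (D : W p m n t F) (f : O p m n t F) (r₀ : Fin (2 * m))
    (h1 : ∀ r, r ≠ r₀ → D (Sum.inl r) = 0) (h2 : ∀ s, D (Sum.inr s) = 0) :
    act p m n t F D f = mul p m n t F (D (Sum.inl r₀)) (pdE p m n t F r₀ f) := by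
  rw [act_split]
  rw [Finset.sum_eq_single r₀
    (fun r _ hr => by rw [h1 r hr, mul_zero_left]) (fun h => absurd (Finset.mem_univ r₀) h)]
  rw [Finset.sum_eq_zero (fun s _ => by rw [h2 s, mul_zero_left]), add_zero]

lemma act_three (D : W p m n t F) (f : O p m n t F) (r₀ : Fin (2 * m)) (s₁ s₂ : Fin n)
    (hs : s₁ ≠ s₂)
    (h1 : ∀ r, r ≠ r₀ → D (Sum.inl r) = 0)
    (h2 : ∀ s, s ≠ s₁ → s ≠ s₂ → D (Sum.inr s) = 0) :
    act p m n t F D f = mul p m n t F (D (Sum.inl r₀)) (pdE p m n t F r₀ f)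
      + (mul p m n t F (D (Sum.inr s₁)) (pdO p m n t F s₁ f)
        + mul p m n t F (D (Sum.inr s₂)) (pdO p m n t F s₂ f)) := by
  rw [act_split]
  rw [Finset.sum_eq_single r₀
    (fun r _ hr => by rw [h1 r hr, mul_zero_left]) (fun h => absurd (Finset.mem_univ r₀) h)]
  congr 1
  rw [← Finset.sum_subset (Finset.subset_univ ({s₁, s₂} : Finset (Fin n)))
    (fun s _ hs' => by
      rw [h2 s (fun h => hs' (by simp [h])) (fun h => hs' (by simp [h])), mul_zero_left])]
  rw [Finset.sum_pair hs]

lemma act_of_pd_zero (D : W p m n t F) (g : O p m n t F)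
    (h1 : ∀ r, pdE p m n t F r g = 0) (h2 : ∀ s, pdO p m n t F s g = 0) :
    act p m n t F D g = 0 := by
  rw [act_split]
  rw [Finset.sum_eq_zero (fun r _ => by rw [h1 r, mul_zero_right]),
    Finset.sum_eq_zero (fun s _ => by rw [h2 s, mul_zero_right]), add_zero]

lemma act_pd_single_inl (D : W p m n t F) (g : O p m n t F) (r₀ : Fin (2 * m))
    (h1 : ∀ r, r ≠ r₀ → pdE p m n t F r g = 0) (h2 : ∀ s, pdO p m n t F s g = 0) :
    act p m n t F D g = mul p m n t F (D (Sum.inl r₀)) (pdE p m n t F r₀ g) := by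
  rw [act_split]
  rw [Finset.sum_eq_single r₀
    (fun r _ hr => by rw [h1 r hr, mul_zero_right]) (fun h => absurd (Finset.mem_univ r₀) h)]
  rw [Finset.sum_eq_zero (fun s _ => by rw [h2 s, mul_zero_right]), add_zero]

lemma act_pd_pair (D : W p m n t F) (g : O p m n t F) (r₀ : Fin (2 * m)) (s₀ : Fin n)
    (h1 : ∀ r, r ≠ r₀ → pdE p m n t F r g = 0) (h2 : ∀ s, s ≠ s₀ → pdO p m n t F s g = 0) :
    act p m n t F D g = mul p m n t F (D (Sum.inl r₀)) (pdE p m n t F r₀ g)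
      + mul p m n t F (D (Sum.inr s₀)) (pdO p m n t F s₀ g) := by
  rw [act_split]
  rw [Finset.sum_eq_single r₀
    (fun r _ hr => by rw [h1 r hr, mul_zero_right]) (fun h => absurd (Finset.mem_univ r₀) h)]
  congr 1
  rw [Finset.sum_eq_single s₀
    (fun s _ hs => by rw [h2 s hs, mul_zero_right]) (fun h => absurd (Finset.mem_univ s₀) h)]

lemma act_pd_two_inr (D : W p m n t F) (g : O p m n t F) (s₁ s₂ : Fin n) (hs : s₁ ≠ s₂)
    (h1 : ∀ r, pdE p m n t F r g = 0) (h2 : ∀ s, s ≠ s₁ → s ≠ s₂ → pdO p m n t F s g = 0) :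
    act p m n t F D g = mul p m n t F (D (Sum.inr s₁)) (pdO p m n t F s₁ g)
      + mul p m n t F (D (Sum.inr s₂)) (pdO p m n t F s₂ g) := by
  rw [act_split]
  rw [Finset.sum_eq_zero (fun r _ => by rw [h1 r, mul_zero_right]), zero_add]
  rw [← Finset.sum_subset (Finset.subset_univ ({s₁, s₂} : Finset (Fin n)))
    (fun s _ hs' => by
      rw [h2 s (fun h => hs' (by simp [h])) (fun h => hs' (by simp [h])), mul_zero_right])]
  rw [Finset.sum_pair hs]

-- DH components on basis elements
lemma DH_xE_inl (α : MIdx p m t) {u : Finset (Fin n)} (hu : Even u.card) (j : Fin (2 * m)) :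
    DH p m n t F (xE p m n t F α u) (Sum.inl j) =
      tauF m F (primeE m j) • pdE p m n t F (primeE m j) (xE p m n t F α u) := by
  show tauF m F (primeE m j) •
      (pdE p m n t F (primeE m j) (evenO p m n t F (xE p m n t F α u))
        + pdE p m n t F (primeE m j) (oddO p m n t F (xE p m n t F α u))) = _
  rw [evenO_xE_even hu, oddO_xE_even hu, pdE_zero, add_zero]

lemma DH_xE_inr (α : MIdx p m t) {u : Finset (Fin n)} (hu : Even u.card) (s : Fin n) :
    DH p m n t F (xE p m n t F α u) (Sum.inr s) = pdO p m n t F s (xE p m n t F α u) := by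
  show pdO p m n t F s (evenO p m n t F (xE p m n t F α u))
      - pdO p m n t F s (oddO p m n t F (xE p m n t F α u)) = _
  rw [evenO_xE_even hu, oddO_xE_even hu, pdO_zero, sub_zero]

lemma mul_one_left (H : ∀ i, 3 < p ^ t i) (g : O p m n t F) :
    mul p m n t F (xE p m n t F (midx0 H) ∅) g = g := by
  funext b
  rw [mul_xE_left, if_pos ⟨fun i => by simp [midx0_val], Finset.empty_subset _⟩]
  rw [sgn_empty_left, msub_midx0, Finset.sdiff_empty]
  simp [midx0_val]

lemma mul_one_right (H : ∀ i, 3 < p ^ t i) (f : O p m n t F) :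
    mul p m n t F f (xE p m n t F (midx0 H) ∅) = f := by
  funext b
  rw [mul_xE_right, if_pos ⟨fun i => by simp [midx0_val], Finset.empty_subset _⟩]
  rw [sgn_empty_right, msub_midx0, Finset.sdiff_empty]
  simp [midx0_val, Nat.choose_self]

end Aux4
section Aux5
variable {p m n : ℕ} {t : Fin (2 * m) → ℕ} {F : Type} [Field F]

lemma evenO_xE_odd {u : Finset (Fin n)} (h : ¬ Even u.card) (α : MIdx p m t) :
    evenO p m n t F (xE p m n t F α u) = 0 := by
  funext b
  unfold evenO
  by_cases hb : b = (α, u)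
  · subst hb
    rw [if_neg (by rw [Nat.even_iff] at h; simpa using h)]
    rfl
  · rw [xE_apply, if_neg hb, ite_self]
    rfl

lemma oddO_zero : oddO p m n t F 0 = 0 := by
  funext b; unfold oddO; split <;> rfl

lemma evenO_zero : evenO p m n t F 0 = 0 := by
  funext b; unfold evenO; split <;> rfl

lemma oddO_smul (c : F) (f : O p m n t F) :
    oddO p m n t F (c • f) = c • oddO p m n t F f := by
  funext b; unfold oddO; rw [Pi.smul_apply, Pi.smul_apply]
  split_ifs <;> simp

lemma evenO_smul (c : F) (f : O p m n t F) :
    evenO p m n t F (c • f) = c • evenO p m n t F f := by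
  funext b; unfold evenO; rw [Pi.smul_apply, Pi.smul_apply]
  split_ifs <;> simp

lemma oddW_DH_even (α : MIdx p m t) {u : Finset (Fin n)} (hu : Even u.card) :
    oddW p m n t F (DH p m n t F (xE p m n t F α u)) = 0 := by
  funext j
  cases j with
  | inl r =>
    show oddO p m n t F (DH p m n t F (xE p m n t F α u) (Sum.inl r)) = 0
    rw [DH_xE_inl _ hu, pdE_xE]
    split_ifs
    · rw [oddO_smul, oddO_xE_even hu, smul_zero]
    · rw [smul_zero, oddO_zero]
  | inr s =>
    show evenO p m n t F (DH p m n t F (xE p m n t F α u) (Sum.inr s)) = 0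
    rw [DH_xE_inr _ hu, pdO_xE]
    split_ifs with hs
    · have hodd : ¬ Even ((u.erase s).card) := by
        have hpos : 0 < u.card := Finset.card_pos.mpr ⟨s, hs⟩
        have h1 := Nat.even_iff.mp hu
        intro hcontra
        have h2 := Nat.even_iff.mp hcontra
        rw [Finset.card_erase_of_mem hs] at h2
        omega
      rw [evenO_smul, evenO_xE_odd hodd, smul_zero]
    · rw [evenO_zero]

lemma bra_red (D E' : W p m n t F) (hodd : oddW p m n t F E' = 0) (j : Y m n) :
    bra p m n t F D E' j =
      act p m n t F D (E' j) - act p m n t F E' (D j) := by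
  unfold bra
  rw [hodd, act_zero_left, add_zero, add_zero]

-- components of the generators
lemma y1_inl_eq (H : ∀ i, 3 < p ^ t i) (i : Fin (2 * m)) :
    DH p m n t F (xE p m n t F (eps H i) ∅) (Sum.inl (primeE m i)) =
      tauF m F i • xE p m n t F (midx0 H) ∅ := by
  rw [DH_xE_inl _ (by simp), primeE_primeE, pdE_eps]

lemma y1_inl_ne (H : ∀ i, 3 < p ^ t i) (i : Fin (2 * m)) {j : Fin (2 * m)}
    (hj : j ≠ primeE m i) :
    DH p m n t F (xE p m n t F (eps H i) ∅) (Sum.inl j) = 0 := by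
  rw [DH_xE_inl _ (by simp), pdE_eps_ne H (fun h => hj (by rw [← h, primeE_primeE])), smul_zero]

lemma y1_inr (H : ∀ i, 3 < p ^ t i) (i : Fin (2 * m)) (s : Fin n) :
    DH p m n t F (xE p m n t F (eps H i) ∅) (Sum.inr s) = 0 := by
  rw [DH_xE_inr _ (by simp), pdO_empty]

lemma y2_inl_eq (H : ∀ i, 3 < p ^ t i) (i : Fin (2 * m)) :
    DH p m n t F (xE p m n t F (eps2 H i) ∅) (Sum.inl (primeE m i)) =
      tauF m F i • xE p m n t F (eps H i) ∅ := by
  rw [DH_xE_inl _ (by simp), primeE_primeE, pdE_eps2]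

lemma y2_inl_ne (H : ∀ i, 3 < p ^ t i) (i : Fin (2 * m)) {j : Fin (2 * m)}
    (hj : j ≠ primeE m i) :
    DH p m n t F (xE p m n t F (eps2 H i) ∅) (Sum.inl j) = 0 := by
  rw [DH_xE_inl _ (by simp), pdE_eps2_ne H (fun h => hj (by rw [← h, primeE_primeE])), smul_zero]

lemma y2_inr (H : ∀ i, 3 < p ^ t i) (i : Fin (2 * m)) (s : Fin n) :
    DH p m n t F (xE p m n t F (eps2 H i) ∅) (Sum.inr s) = 0 := by
  rw [DH_xE_inr _ (by simp), pdO_empty]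

lemma even_pair {k l : Fin n} (hkl : k ≠ l) : Even (({k, l} : Finset (Fin n)).card) := by
  rw [Finset.card_pair hkl]; exact even_two

lemma y3_inl_eq (H : ∀ i, 3 < p ^ t i) (i : Fin (2 * m)) {k l : Fin n} (hkl : k ≠ l) :
    DH p m n t F (xE p m n t F (eps H i) {k, l}) (Sum.inl (primeE m i)) =
      tauF m F i • xE p m n t F (midx0 H) {k, l} := by
  rw [DH_xE_inl _ (even_pair hkl), primeE_primeE, pdE_eps]

lemma y3_inl_ne (H : ∀ i, 3 < p ^ t i) (i : Fin (2 * m)) {k l : Fin n} (hkl : k ≠ l)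
    {j : Fin (2 * m)} (hj : j ≠ primeE m i) :
    DH p m n t F (xE p m n t F (eps H i) {k, l}) (Sum.inl j) = 0 := by
  rw [DH_xE_inl _ (even_pair hkl),
    pdE_eps_ne H (fun h => hj (by rw [← h, primeE_primeE])), smul_zero]

lemma y3_inr_k (H : ∀ i, 3 < p ^ t i) (i : Fin (2 * m)) {k l : Fin n} (hkl : k ≠ l) :
    DH p m n t F (xE p m n t F (eps H i) {k, l}) (Sum.inr k) =
      ((-1 : F) ^ (({l} : Finset (Fin n)).filter (fun j => j < k)).card) •
        xE p m n t F (eps H i) {l} := by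
  rw [DH_xE_inr _ (even_pair hkl), pdO_pair_left hkl]

lemma y3_inr_l (H : ∀ i, 3 < p ^ t i) (i : Fin (2 * m)) {k l : Fin n} (hkl : k ≠ l) :
    DH p m n t F (xE p m n t F (eps H i) {k, l}) (Sum.inr l) =
      ((-1 : F) ^ (({k} : Finset (Fin n)).filter (fun j => j < l)).card) •
        xE p m n t F (eps H i) {k} := by
  rw [DH_xE_inr _ (even_pair hkl), pdO_pair_right hkl]

lemma y3_inr_ne (H : ∀ i, 3 < p ^ t i) (i : Fin (2 * m)) {k l s : Fin n} (hkl : k ≠ l)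
    (h1 : s ≠ k) (h2 : s ≠ l) :
    DH p m n t F (xE p m n t F (eps H i) {k, l}) (Sum.inr s) = 0 := by
  rw [DH_xE_inr _ (even_pair hkl), pdO_pair_ne h1 h2]

lemma h_inl (H : ∀ i, 3 < p ^ t i) (j : Fin (2 * m)) :
    DH p m n t F (xE p m n t F (piIdx H) ∅) (Sum.inl j) =
      tauF m F (primeE m j) • xE p m n t F (dec (piIdx H) (primeE m j)) ∅ := by
  rw [DH_xE_inl _ (by simp), pdE_pi]

lemma h_inr (H : ∀ i, 3 < p ^ t i) (s : Fin n) :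
    DH p m n t F (xE p m n t F (piIdx H) ∅) (Sum.inr s) = 0 := by
  rw [DH_xE_inr _ (by simp), pdO_empty]

-- special products
lemma mul_eps_top (H : ∀ i, 3 < p ^ t i) (i : Fin (2 * m)) (γ : MIdx p m t)
    (v : Finset (Fin n)) (htop : (γ i : ℕ) = p ^ t i - 1) :
    mul p m n t F (xE p m n t F (eps H i) ∅) (xE p m n t F γ v) = 0 := by
  funext b
  rw [mul_xE_left]
  split_ifs with hc
  · have h0 : xE p m n t F γ v (msub b.1 (eps H i), b.2 \ ∅) = 0 := by
      rw [xE_apply, if_neg]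
      intro hc2
      rw [Prod.mk.injEq] at hc2
      have hv := congrArg Fin.val (congrFun hc2.1 i)
      simp [msub_val, eps_val] at hv
      have h1 := hc.1 i
      simp [eps_val] at h1
      have := (b.1 i).isLt
      have := H i
      omega
    rw [h0, mul_zero]
    rfl
  · rfl

lemma mul_eps_dec (H : ∀ i, 3 < p ^ t i) (i : Fin (2 * m)) (γ' : MIdx p m t)
    (v : Finset (Fin n)) (hge : 1 ≤ (γ' i : ℕ)) :
    mul p m n t F (xE p m n t F (eps H i) ∅) (xE p m n t F (dec γ' i) v) =
      (((γ' i : ℕ) : F)) • xE p m n t F γ' v := by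
  funext b
  rw [mul_xE_left]
  by_cases hb : b = (γ', v)
  · subst hb
    rw [if_pos ⟨fun j => by
      by_cases hj : j = i
      · subst hj; simpa [eps_val] using hge
      · simp [eps_val, hj], Finset.empty_subset _⟩]
    rw [sgn_empty_left, Finset.sdiff_empty]
    have hprod : (∏ j, (((γ' j : ℕ)).choose ((eps H i j : ℕ)) : F)) = ((γ' i : ℕ) : F) := by
      rw [Finset.prod_eq_single i
        (fun j _ hj => by simp [eps_val, hj])
        (fun h => absurd (Finset.mem_univ i) h)]
      simp [eps_val, Nat.choose_one_right]
    have hmsub : msub γ' (eps H i) = dec γ' i := by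
      funext j
      apply Fin.ext
      by_cases hj : j = i
      · subst hj; simp [msub_val, eps_val, dec_val]
      · simp [msub_val, eps_val, dec_val, hj]
    rw [hprod, hmsub, xE_apply, if_pos rfl, Pi.smul_apply, xE_apply, if_pos rfl]
    simp
  · have hrhs : xE p m n t F γ' v b = 0 := by rw [xE_apply, if_neg hb]
    rw [Pi.smul_apply, hrhs, smul_zero]
    split_ifs with hc
    · have h0 : xE p m n t F (dec γ' i) v (msub b.1 (eps H i), b.2 \ ∅) = 0 := by
        rw [xE_apply, if_neg]
        intro hc2
        rw [Prod.mk.injEq] at hc2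
        apply hb
        rw [Prod.mk.injEq]
        constructor
        · funext j
          apply Fin.ext
          have hv := congrArg Fin.val (congrFun hc2.1 j)
          simp only [msub_val] at hv
          have h1 := hc.1 j
          by_cases hj : j = i
          · subst hj
            simp [eps_val] at h1
            simp [eps_val, dec_val] at hv
            omega
          · simp [eps_val, hj] at h1
            simp [eps_val, hj, dec_val] at hv
            omega
        · rw [← hc2.2, Finset.sdiff_empty]
      rw [h0, mul_zero]
    · rfl

lemma mul_xE0L (H : ∀ i, 3 < p ^ t i) (v : Finset (Fin n)) (γ : MIdx p m t) :
    mul p m n t F (xE p m n t F (midx0 H) v) (xE p m n t F γ ∅) = xE p m n t F γ v := by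
  funext b
  rw [mul_xE_left]
  by_cases hb : b = (γ, v)
  · subst hb
    rw [if_pos ⟨fun j => by simp [midx0_val], subset_rfl⟩]
    show sgn n F v (v \ v) * _ * _ = _
    rw [Finset.sdiff_self, sgn_empty_right, msub_midx0, xE_apply, if_pos rfl, xE_apply,
      if_pos rfl]
    simp [midx0_val]
  · have hrhs : xE p m n t F γ v b = 0 := by rw [xE_apply, if_neg hb]
    rw [hrhs]
    split_ifs with hc
    · have h0 : xE p m n t F γ ∅ (msub b.1 (midx0 H), b.2 \ v) = 0 := by
        rw [xE_apply, if_neg]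
        intro hc2
        rw [Prod.mk.injEq, msub_midx0] at hc2
        apply hb
        rw [Prod.mk.injEq]
        exact ⟨hc2.1 ▸ rfl, Finset.Subset.antisymm
          (Finset.sdiff_eq_empty_iff_subset.mp hc2.2) hc.2⟩
      rw [h0, mul_zero]
    · rfl

lemma mul_xE0R (H : ∀ i, 3 < p ^ t i) (β : MIdx p m t) (v : Finset (Fin n)) :
    mul p m n t F (xE p m n t F β ∅) (xE p m n t F (midx0 H) v) = xE p m n t F β v := by
  funext b
  rw [mul_xE_right]
  by_cases hb : b = (β, v)
  · subst hb
    rw [if_pos ⟨fun j => by simp [midx0_val], subset_rfl⟩]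
    show sgn n F (v \ v) v * _ * _ = _
    rw [Finset.sdiff_self, sgn_empty_left, msub_midx0, xE_apply, if_pos (by simp),
      xE_apply, if_pos rfl]
    simp [midx0_val, Nat.choose_self]
  · have hrhs : xE p m n t F β v b = 0 := by rw [xE_apply, if_neg hb]
    rw [hrhs]
    split_ifs with hc
    · have h0 : xE p m n t F β ∅ (msub b.1 (midx0 H), b.2 \ v) = 0 := by
        rw [xE_apply, if_neg]
        intro hc2
        rw [Prod.mk.injEq, msub_midx0] at hc2
        apply hb
        rw [Prod.mk.injEq]
        exact ⟨hc2.1 ▸ rfl, Finset.Subset.antisymm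
          (Finset.sdiff_eq_empty_iff_subset.mp hc2.2) hc.2⟩
      rw [h0, mul_zero]
    · rfl

end Aux5
section Aux6
variable {p m n : ℕ} {t : Fin (2 * m) → ℕ} {F : Type} [Field F]

lemma msub_self (H : ∀ i, 3 < p ^ t i) (β : MIdx p m t) : msub β β = midx0 H := by
  funext j; apply Fin.ext; simp [msub_val, midx0_val]

lemma sgn_single (k l : Fin n) :
    sgn n F {k} {l} = (-1 : F) ^ (({l} : Finset (Fin n)).filter (fun j => j < k)).card := by
  unfold sgn
  congr 1
  rw [Finset.singleton_product_singleton]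
  rw [Finset.filter_singleton, Finset.filter_singleton]
  split_ifs <;> simp

lemma neg_one_pow_mul_self (a : ℕ) : ((-1 : F) ^ a) * (-1 : F) ^ a = 1 := by
  rw [← pow_add]
  exact Even.neg_one_pow ⟨a, rfl⟩

lemma act_mixed_single (D : W p m n t F) (g : O p m n t F) (r₀ : Fin (2 * m))
    (h1 : ∀ r, r ≠ r₀ → pdE p m n t F r g = 0) (h2 : ∀ s, D (Sum.inr s) = 0) :
    act p m n t F D g = mul p m n t F (D (Sum.inl r₀)) (pdE p m n t F r₀ g) := by
  rw [act_split]
  rw [Finset.sum_eq_single r₀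
    (fun r _ hr => by rw [h1 r hr, mul_zero_right]) (fun h => absurd (Finset.mem_univ r₀) h)]
  rw [Finset.sum_eq_zero (fun s _ => by rw [h2 s, mul_zero_left]), add_zero]

lemma act_zero_mixed (D : W p m n t F) (g : O p m n t F)
    (h1 : ∀ r, pdE p m n t F r g = 0) (h2 : ∀ s, D (Sum.inr s) = 0) :
    act p m n t F D g = 0 := by
  rw [act_split]
  rw [Finset.sum_eq_zero (fun r _ => by rw [h1 r, mul_zero_right]),
    Finset.sum_eq_zero (fun s _ => by rw [h2 s, mul_zero_left]), add_zero]

lemma bra_y1_h (H : ∀ i, 3 < p ^ t i) (hm : 0 < m) (i : Fin (2 * m)) :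
    bra p m n t F (DH p m n t F (xE p m n t F (eps H i) ∅))
        (DH p m n t F (xE p m n t F (piIdx H) ∅)) =
      tauF m F i • DH p m n t F (xE p m n t F (dec (piIdx H) (primeE m i)) ∅) := by
  funext j
  rw [bra_red _ _ (oddW_DH_even _ (by simp))]
  cases j with
  | inl j =>
    rw [h_inl H j, act_smul_right,
      act_eq_single_inl _ _ (primeE m i) (fun r hr => y1_inl_ne H i hr) (y1_inr H i),
      y1_inl_eq H i, pdE_decpi, mul_smul_left, mul_one_left H]
    have hz : act p m n t F (DH p m n t F (xE p m n t F (piIdx H) ∅))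
        (DH p m n t F (xE p m n t F (eps H i) ∅) (Sum.inl j)) = 0 := by
      by_cases hj : j = primeE m i
      · subst hj
        rw [y1_inl_eq H i, act_smul_right,
          act_of_pd_zero _ _ (fun r => pdE_midx0 H r _) (fun s => pdO_empty s _), smul_zero]
      · rw [y1_inl_ne H i hj, act_zero_right]
    rw [hz, sub_zero]
    show _ = tauF m F i •
      (DH p m n t F (xE p m n t F (dec (piIdx H) (primeE m i)) ∅) (Sum.inl j))
    rw [DH_xE_inl _ (by simp), pdE_decpi, dec_comm]
    rw [smul_smul, smul_smul, mul_comm]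
  | inr s =>
    rw [h_inr H s, act_zero_right, y1_inr H i s, act_zero_right, sub_zero]
    show _ = tauF m F i •
      (DH p m n t F (xE p m n t F (dec (piIdx H) (primeE m i)) ∅) (Sum.inr s))
    rw [DH_xE_inr _ (by simp), pdO_empty, smul_zero]

lemma bra_y2_h (H : ∀ i, 3 < p ^ t i) (hm : 0 < m)
    (hcast : ∀ i : Fin (2 * m), ((p ^ t i - 1 : ℕ) : F) = -1) (i : Fin (2 * m)) :
    bra p m n t F (DH p m n t F (xE p m n t F (eps2 H i) ∅))
        (DH p m n t F (xE p m n t F (piIdx H) ∅)) = 0 := by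
  have hne2 : i ≠ primeE m i := fun h => (primeE_ne hm i) h.symm
  funext j
  rw [bra_red _ _ (oddW_DH_even _ (by simp))]
  cases j with
  | inl j =>
    rw [h_inl H j, act_smul_right,
      act_eq_single_inl _ _ (primeE m i) (fun r hr => y2_inl_ne H i hr) (y2_inr H i),
      y2_inl_eq H i, pdE_decpi, mul_smul_left]
    by_cases hj : j = primeE m i
    · subst hj
      rw [primeE_primeE, dec_comm]
      have hge : 1 ≤ ((dec (piIdx H) (primeE m i)) i : ℕ) := by
        have := H i
        simp [dec_val, piIdx_val, hne2]
        omega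
      rw [mul_eps_dec H i (dec (piIdx H) (primeE m i)) ∅ hge]
      have hval : (((dec (piIdx H) (primeE m i)) i : ℕ) : F) = -1 := by
        have hv : ((dec (piIdx H) (primeE m i)) i : ℕ) = p ^ t i - 1 := by
          simp [dec_val, piIdx_val, hne2]
        rw [hv, hcast i]
      rw [hval]
      rw [y2_inl_eq H i, act_smul_right,
        act_mixed_single _ _ i (fun r hr => pdE_eps_ne H hr _) (h_inr H),
        h_inl H i, pdE_eps, mul_smul_left, mul_one_right H, tauF_primeE hm i]
      simp only [smul_smul]
      rw [← sub_smul]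
      have hzz : tauF m F i * (tauF m F i * (-1 : F)) - tauF m F i * (-tauF m F i) = 0 := by
        ring
      rw [hzz, zero_smul]
      rfl
    · have hne1 : i ≠ primeE m j := fun h => hj (by rw [h, primeE_primeE])
      have hγ : ((dec (dec (piIdx H) (primeE m j)) (primeE m i)) i : ℕ) = p ^ t i - 1 := by
        simp [dec_val, piIdx_val, hne1, hne2]
      rw [mul_eps_top H i _ ∅ hγ, smul_zero, smul_zero,
        y2_inl_ne H i hj, act_zero_right, sub_zero]
      rfl
  | inr s =>
    rw [h_inr H s, act_zero_right, y2_inr H i s, act_zero_right, sub_zero]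
    rfl

lemma bra_y3_h (H : ∀ i, 3 < p ^ t i) (hm : 0 < m) (i : Fin (2 * m)) {k l : Fin n}
    (hkl : k ≠ l) :
    bra p m n t F (DH p m n t F (xE p m n t F (eps H i) {k, l}))
        (DH p m n t F (xE p m n t F (piIdx H) ∅)) =
      tauF m F i • DH p m n t F (xE p m n t F (dec (piIdx H) (primeE m i)) {k, l}) := by
  funext j
  rw [bra_red _ _ (oddW_DH_even _ (by simp))]
  cases j with
  | inl j =>
    rw [h_inl H j, act_smul_right,
      act_three _ _ (primeE m i) k l hkl (fun r hr => y3_inl_ne H i hkl hr)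
        (fun s h1 h2 => y3_inr_ne H i hkl h1 h2),
      y3_inl_eq H i hkl, y3_inr_k H i hkl, y3_inr_l H i hkl, pdE_decpi, pdO_empty, pdO_empty,
      mul_zero_right, mul_zero_right, add_zero, add_zero, mul_smul_left, mul_xE0L H]
    have hz : act p m n t F (DH p m n t F (xE p m n t F (piIdx H) ∅))
        (DH p m n t F (xE p m n t F (eps H i) {k, l}) (Sum.inl j)) = 0 := by
      by_cases hj : j = primeE m i
      · subst hj
        rw [y3_inl_eq H i hkl, act_smul_right,
          act_zero_mixed _ _ (fun r => pdE_midx0 H r _) (h_inr H), smul_zero]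
      · rw [y3_inl_ne H i hkl hj, act_zero_right]
    rw [hz, sub_zero]
    show _ = tauF m F i •
      (DH p m n t F (xE p m n t F (dec (piIdx H) (primeE m i)) {k, l}) (Sum.inl j))
    rw [DH_xE_inl _ (even_pair hkl), pdE_decpi, dec_comm]
    rw [smul_smul, smul_smul, mul_comm]
  | inr s =>
    rw [h_inr H s, act_zero_right]
    show _ = tauF m F i •
      (DH p m n t F (xE p m n t F (dec (piIdx H) (primeE m i)) {k, l}) (Sum.inr s))
    rw [DH_xE_inr (dec (piIdx H) (primeE m i)) (even_pair hkl) s]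
    by_cases hsk : s = k
    · subst hsk
      rw [y3_inr_k H i hkl, act_smul_right,
        act_mixed_single _ _ i (fun r hr => pdE_eps_ne H hr _) (h_inr H),
        h_inl H i, pdE_eps, mul_smul_left, mul_xE0R H, pdO_pair_left hkl, tauF_primeE hm i,
        zero_sub]
      simp only [smul_smul]
      rw [← neg_smul]
      congr 1
      ring
    · by_cases hsl : s = l
      · subst hsl
        rw [y3_inr_l H i hkl, act_smul_right,
          act_mixed_single _ _ i (fun r hr => pdE_eps_ne H hr _) (h_inr H),
          h_inl H i, pdE_eps, mul_smul_left, mul_xE0R H, pdO_pair_right hkl, tauF_primeE hm i,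
          zero_sub]
        simp only [smul_smul]
        rw [← neg_smul]
        congr 1
        ring
      · rw [y3_inr_ne H i hkl hsk hsl, act_zero_right, sub_zero, pdO_pair_ne hsk hsl,
          smul_zero]

end Aux6
section Aux7
variable {p m n : ℕ} {t : Fin (2 * m) → ℕ} {F : Type} [Field F]

lemma pdO_apply_mem (f : O p m n t F) (s : Fin n) (β : MIdx p m t) (v : Finset (Fin n))
    (hs : s ∈ v) : pdO p m n t F s f (β, v) = 0 := by
  unfold pdO
  rw [if_pos hs]

lemma pdO_apply_not_mem (f : O p m n t F) (s : Fin n) (β : MIdx p m t) (v : Finset (Fin n))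
    (hs : s ∉ v) : pdO p m n t F s f (β, v) =
      ((-1 : F) ^ (v.filter (fun j => j < s)).card) * f (β, insert s v) := by
  unfold pdO
  rw [if_neg hs]

lemma support_of_pdE_zero {f : O p m n t F} {r : Fin (2 * m)}
    (hf : pdE p m n t F r f = 0) (β : MIdx p m t) (w : Finset (Fin n))
    (hr : (β r : ℕ) ≠ 0) : f (β, w) = 0 := by
  have hlt : (β r : ℕ) - 1 < p ^ t r := by have := (β r).isLt; omega
  set β' : MIdx p m t := Function.update β r ⟨(β r : ℕ) - 1, hlt⟩ with hβ'
  have hval : (β' r : ℕ) = (β r : ℕ) - 1 := by rw [hβ', Function.update_self]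
  have hcond : (β' r : ℕ) + 1 < p ^ t r := by
    rw [hval]; have := (β r).isLt; omega
  have hupd : Function.update β' r ⟨(β' r : ℕ) + 1, hcond⟩ = β := by
    funext j'
    by_cases hj' : j' = r
    · subst hj'
      rw [Function.update_self]
      apply Fin.ext
      show (β' j' : ℕ) + 1 = (β j' : ℕ)
      rw [hval]; omega
    · rw [Function.update_of_ne hj', hβ', Function.update_of_ne hj']
  have h := congrFun hf (β', w)
  have heval : pdE p m n t F r f (β', w) = f (β, w) := by
    show (if h : (β' r : ℕ) + 1 < p ^ t r then
        f (Function.update β' r ⟨(β' r : ℕ) + 1, h⟩, w) else 0) = f (β, w)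
    rw [dif_pos hcond, hupd]
  rw [heval] at h
  exact h

lemma centralizer (H : ∀ i, 3 < p ^ t i) (hm : 0 < m) (hn : 3 < n) (hno : Odd n)
    (h2F : (2 : F) ≠ 0) (i₀ : Fin (2 * m))
    (E : W p m n t F) (hE : E ∈ calW p m n t F)
    (hb1 : ∀ i, bra p m n t F (DH p m n t F (xE p m n t F (eps H i) ∅)) E = 0)
    (hb2 : ∀ i, bra p m n t F (DH p m n t F (xE p m n t F (eps2 H i) ∅)) E = 0)
    (hb3 : ∀ k l : Fin n, k ≠ l →
      bra p m n t F (DH p m n t F (xE p m n t F (eps H i₀) {k, l})) E = 0) :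
    E = 0 := by
  have hoE := oddW_of_calW hE
  -- Step A : all even partials of all coefficients of E vanish
  have rel1 : ∀ (j : Y m n) (r : Fin (2 * m)), pdE p m n t F r (E j) = 0 := by
    intro j r
    have h := congrFun (hb1 (primeE m r)) j
    rw [bra_red _ _ hoE] at h
    rw [act_eq_single_inl _ _ (primeE m (primeE m r))
      (fun r' hr' => y1_inl_ne H _ hr') (y1_inr H _)] at h
    rw [y1_inl_eq H (primeE m r), mul_smul_left, mul_one_left H, primeE_primeE] at h
    have hz : act p m n t F E
        (DH p m n t F (xE p m n t F (eps H (primeE m r)) ∅) j) = 0 := by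
      cases j with
      | inl j' =>
        by_cases hj : j' = primeE m (primeE m r)
        · subst hj
          rw [y1_inl_eq H (primeE m r), act_smul_right,
            act_of_pd_zero _ _ (fun r' => pdE_midx0 H r' _) (fun s => pdO_empty s _),
            smul_zero]
        · rw [y1_inl_ne H _ hj, act_zero_right]
      | inr s => rw [y1_inr H _ s, act_zero_right]
    rw [hz, sub_zero] at h
    exact (smul_eq_zero.mp h).resolve_left (tauF_ne_zero _)
  -- coefficients concentrated on β = 0
  have rel1' : ∀ (j : Y m n) (β : MIdx p m t) (w : Finset (Fin n)),
      β ≠ midx0 H → E j (β, w) = 0 := by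
    intro j β w hβ
    have hex : ∃ r, (β r : ℕ) ≠ 0 := by
      by_contra hc
      push_neg at hc
      exact hβ (funext fun r => Fin.ext (by simp [midx0_val, hc r]))
    obtain ⟨r, hr⟩ := hex
    exact support_of_pdE_zero (rel1 j r) β w hr
  -- Step B : even coefficients of E vanish
  have rel2 : ∀ i, E (Sum.inl i) = 0 := by
    intro i
    have h := congrFun (hb2 i) (Sum.inl (primeE m i))
    rw [bra_red _ _ hoE] at h
    rw [act_eq_single_inl _ _ (primeE m i)
      (fun r hr => y2_inl_ne H i hr) (y2_inr H i)] at h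
    rw [rel1 (Sum.inl (primeE m i)) (primeE m i), mul_zero_right] at h
    rw [y2_inl_eq H i, act_smul_right,
      act_pd_single_inl E _ i (fun r hr => pdE_eps_ne H hr _) (fun s => pdO_empty s _),
      pdE_eps, mul_one_right H, zero_sub] at h
    have h' : -(tauF m F i • E (Sum.inl i)) = 0 := h
    rw [neg_eq_zero] at h'
    exact (smul_eq_zero.mp h').resolve_left (tauF_ne_zero _)
  -- Step C
  have rel3 : ∀ k l : Fin n, k ≠ l → ∀ w : Finset (Fin n),
      ((k ∈ w ∧ l ∈ w) ∨ (k ∉ w ∧ l ∉ w)) → E (Sum.inr l) (midx0 H, w) = 0 := by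
    intro k l hkl w hw
    have h := congrFun (hb3 k l hkl) (Sum.inr k)
    rw [bra_red _ _ hoE] at h
    rw [act_three _ _ (primeE m i₀) k l hkl (fun r hr => y3_inl_ne H i₀ hkl hr)
      (fun s h1 h2 => y3_inr_ne H i₀ hkl h1 h2)] at h
    rw [rel1 (Sum.inr k) (primeE m i₀), mul_zero_right, zero_add] at h
    rw [y3_inr_k H i₀ hkl, y3_inr_l H i₀ hkl] at h
    rw [mul_smul_left, mul_smul_left, act_smul_right] at h
    rw [act_pd_pair E _ i₀ l (fun r hr => pdE_eps_ne H hr _) (fun s hs => pdO_single_ne hs _),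
      pdE_eps, rel2 i₀, mul_zero_left, zero_add, pdO_single] at h
    have h2 := congrFun h ((eps H i₀, w) : BIdx p m n t)
    simp only [Pi.add_apply, Pi.sub_apply, Pi.smul_apply, Pi.zero_apply, smul_eq_mul] at h2
    rw [mul_xE_left, mul_xE_left, mul_xE_right] at h2
    dsimp only at h2
    rw [msub_self H] at h2
    rcases hw with ⟨hkw, hlw⟩ | ⟨hkw, hlw⟩
    · rw [if_pos (⟨fun i' => le_refl _, Finset.singleton_subset_iff.mpr hlw⟩ :
          (∀ i', ((eps H i₀ i' : ℕ)) ≤ ((eps H i₀ i' : ℕ))) ∧ ({l} : Finset (Fin n)) ⊆ w),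
        if_pos (⟨fun i' => le_refl _, Finset.singleton_subset_iff.mpr hkw⟩ :
          (∀ i', ((eps H i₀ i' : ℕ)) ≤ ((eps H i₀ i' : ℕ))) ∧ ({k} : Finset (Fin n)) ⊆ w),
        if_pos (⟨fun i' => le_refl _, Finset.empty_subset _⟩ :
          (∀ i', ((eps H i₀ i' : ℕ)) ≤ ((eps H i₀ i' : ℕ))) ∧ (∅ : Finset (Fin n)) ⊆ w)] at h2
      rw [pdO_apply_mem _ _ _ _ (Finset.mem_sdiff.mpr ⟨hkw, by simp [hkl]⟩),
        pdO_apply_mem _ _ _ _ (Finset.mem_sdiff.mpr ⟨hlw, by simp [hkl.symm]⟩)] at h2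
      rw [Finset.sdiff_empty, sgn_empty_right] at h2
      have hprod1 : (∏ i', (((eps H i₀ i' : ℕ)).choose
          ((eps H i₀ i' : ℕ) - (eps H i₀ i' : ℕ)) : F)) = 1 := by
        rw [Finset.prod_eq_one]
        intro i' _
        simp
      rw [hprod1] at h2
      simp only [mul_zero, zero_add, one_mul, zero_sub, neg_eq_zero] at h2
      exact (mul_eq_zero.mp h2).resolve_left
        (pow_ne_zero _ (neg_ne_zero.mpr one_ne_zero))
    · rw [if_neg (fun hc => hlw (Finset.singleton_subset_iff.mp hc.2)),
        if_neg (fun hc => hkw (Finset.singleton_subset_iff.mp hc.2)),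
        if_pos (⟨fun i' => le_refl _, Finset.empty_subset _⟩ :
          (∀ i', ((eps H i₀ i' : ℕ)) ≤ ((eps H i₀ i' : ℕ))) ∧ (∅ : Finset (Fin n)) ⊆ w)] at h2
      rw [Finset.sdiff_empty, sgn_empty_right] at h2
      have hprod1 : (∏ i', (((eps H i₀ i' : ℕ)).choose
          ((eps H i₀ i' : ℕ) - (eps H i₀ i' : ℕ)) : F)) = 1 := by
        rw [Finset.prod_eq_one]
        intro i' _
        simp
      rw [hprod1] at h2
      simp only [mul_zero, zero_add, one_mul, zero_sub, neg_eq_zero, add_zero] at h2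
      exact (mul_eq_zero.mp h2).resolve_left
        (pow_ne_zero _ (neg_ne_zero.mpr one_ne_zero))
  -- Step D : pair relations for singletons
  have rel4 : ∀ k l : Fin n, k ≠ l →
      E (Sum.inr k) (midx0 H, {k}) + E (Sum.inr l) (midx0 H, {l}) = 0 := by
    intro k l hkl
    have h := congrFun (hb3 k l hkl) (Sum.inl (primeE m i₀))
    rw [bra_red _ _ hoE] at h
    rw [rel2 (primeE m i₀), act_zero_right] at h
    rw [y3_inl_eq H i₀ hkl, act_smul_right,
      act_pd_two_inr E _ k l hkl (fun r => pdE_midx0 H r _) (fun s h1 h2 => pdO_pair_ne h1 h2 _),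
      pdO_pair_left hkl, pdO_pair_right hkl, mul_smul_right, mul_smul_right] at h
    have h0 : (0 : O p m n t F) - tauF m F i₀ •
        (((-1 : F) ^ (({l} : Finset (Fin n)).filter (fun j => j < k)).card) •
            mul p m n t F (E (Sum.inr k)) (xE p m n t F (midx0 H) {l}) +
          ((-1 : F) ^ (({k} : Finset (Fin n)).filter (fun j => j < l)).card) •
            mul p m n t F (E (Sum.inr l)) (xE p m n t F (midx0 H) {k})) = 0 := h
    rw [zero_sub, neg_eq_zero] at h0
    have hX := (smul_eq_zero.mp h0).resolve_left (tauF_ne_zero i₀)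
    have h2 := congrFun hX ((midx0 H, ({k, l} : Finset (Fin n))) : BIdx p m n t)
    simp only [Pi.add_apply, Pi.smul_apply, Pi.zero_apply, smul_eq_mul] at h2
    rw [mul_xE_right, mul_xE_right] at h2
    dsimp only at h2
    rw [if_pos (⟨fun i' => le_refl _, by simp⟩ :
        (∀ i', ((midx0 H i' : ℕ)) ≤ ((midx0 H i' : ℕ))) ∧
          ({l} : Finset (Fin n)) ⊆ {k, l}),
      if_pos (⟨fun i' => le_refl _, by simp⟩ :
        (∀ i', ((midx0 H i' : ℕ)) ≤ ((midx0 H i' : ℕ))) ∧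
          ({k} : Finset (Fin n)) ⊆ {k, l})] at h2
    rw [msub_self H, Finset.sdiff_singleton_eq_erase, Finset.sdiff_singleton_eq_erase,
      pair_erase_left hkl, pair_erase_right hkl, sgn_single k l, sgn_single l k] at h2
    have hprod : (∏ i', (((midx0 H i' : ℕ)).choose
        ((midx0 H i' : ℕ) - (midx0 H i' : ℕ)) : F)) = 1 := by
      rw [Finset.prod_eq_one]
      intro i' _
      simp [midx0_val]
    rw [hprod] at h2
    have hs1 := neg_one_pow_mul_self (F := F)
      ((({l} : Finset (Fin n)).filter (fun j => j < k)).card)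
    have hs2 := neg_one_pow_mul_self (F := F)
      ((({k} : Finset (Fin n)).filter (fun j => j < l)).card)
    linear_combination h2 - (E (Sum.inr k) (midx0 H, {k})) * hs1
      - (E (Sum.inr l) (midx0 H, {l})) * hs2
  -- singles vanish
  have rel5 : ∀ r : Fin n, E (Sum.inr r) (midx0 H, {r}) = 0 := by
    intro r
    have hex : ∃ k l : Fin n, k ≠ l ∧ k ≠ r ∧ l ≠ r := by
      by_cases h0 : r = ⟨0, by omega⟩
      · exact ⟨⟨1, by omega⟩, ⟨2, by omega⟩, Fin.ne_of_val_ne (by simp),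
          by rw [h0]; exact Fin.ne_of_val_ne (by simp),
          by rw [h0]; exact Fin.ne_of_val_ne (by simp)⟩
      · by_cases h1 : r = ⟨1, by omega⟩
        · exact ⟨⟨0, by omega⟩, ⟨2, by omega⟩, Fin.ne_of_val_ne (by simp),
            by rw [h1]; exact Fin.ne_of_val_ne (by simp),
            by rw [h1]; exact Fin.ne_of_val_ne (by simp)⟩
        · exact ⟨⟨0, by omega⟩, ⟨1, by omega⟩, Fin.ne_of_val_ne (by simp),
            fun h => h0 h.symm, fun h => h1 h.symm⟩
    obtain ⟨k, l, hkl, hkr, hlr⟩ := hex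
    have h1 := rel4 r k (Ne.symm hkr)
    have h2 := rel4 r l (Ne.symm hlr)
    have h3 := rel4 k l hkl
    have h4 : (2 : F) * E (Sum.inr r) (midx0 H, {r}) = 0 := by
      linear_combination h1 + h2 - h3
    exact (mul_eq_zero.mp h4).resolve_left h2F
  -- final assembly
  funext j
  cases j with
  | inl i => exact rel2 i
  | inr r =>
    funext b
    rcases b with ⟨β, w⟩
    show E (Sum.inr r) (β, w) = 0
    by_cases hβ : β = midx0 H
    · subst hβ
      by_cases hcard : Even w.card
      · refine hE (Sum.inr r) (midx0 H, w) ?_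
        show ¬ ((w.card + 1) % 2 = 0)
        have := Nat.even_iff.mp hcard
        omega
      · by_cases hw : w = {r}
        · rw [hw]; exact rel5 r
        · by_cases hrw : r ∈ w
          · have hex : ∃ k, k ∈ w ∧ k ≠ r := by
              by_contra hcon
              push_neg at hcon
              apply hw
              apply Finset.Subset.antisymm
              · intro x hx
                rw [Finset.mem_singleton]
                exact hcon x hx
              · intro x hx
                rw [Finset.mem_singleton] at hx
                rw [hx]; exact hrw
            obtain ⟨k, hkw, hkr⟩ := hex
            exact rel3 k r hkr w (Or.inl ⟨hkw, hrw⟩)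
          · have hodd : w.card % 2 = 1 := Nat.not_even_iff.mp hcard
            have hnodd : n % 2 = 1 := Nat.odd_iff.mp hno
            have hle : w.card ≤ n := by
              have h1 := Finset.card_le_univ w
              rwa [Fintype.card_fin] at h1
            have hne : w.card ≠ n := by
              intro hcn
              have huniv : w = Finset.univ :=
                Finset.eq_univ_of_card w (by rw [hcn, Fintype.card_fin])
              exact hrw (huniv ▸ Finset.mem_univ r)
            have hex : ∃ k, k ∉ w ∧ k ≠ r := by
              by_contra hcon
              push_neg at hcon
              have hsub : (Finset.univ : Finset (Fin n)) ⊆ insert r w := by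
                intro x _
                by_cases hx : x ∈ w
                · exact Finset.mem_insert_of_mem hx
                · rw [hcon x hx]; exact Finset.mem_insert_self r w
              have hcle := Finset.card_le_card hsub
              rw [Finset.card_insert_of_notMem hrw, Finset.card_univ, Fintype.card_fin]
                at hcle
              omega
            obtain ⟨k, hkw, hkr⟩ := hex
            exact rel3 k r hkr w (Or.inr ⟨hkw, hrw⟩)
    · exact rel1' (Sum.inr r) β w hβ


end Aux7
section Aux8
variable {p m n : ℕ} {t : Fin (2 * m) → ℕ} {F : Type} [Field F]

lemma frakN_le_calH : frakN p m n t F ≤ calH p m n t F := by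
  apply Submodule.span_mono
  rintro D ⟨α, u, he, h1, h2, rfl⟩
  exact ⟨α, u, he, h1, rfl⟩

lemma gen_mem_frakN (α : MIdx p m t) (u : Finset (Fin n)) (he : Even u.card)
    (hnp : ¬ isPi p m t α) : DH p m n t F (xE p m n t F α u) ∈ frakN p m n t F :=
  Submodule.subset_span ⟨α, u, he, fun hc => hnp hc.1, fun hc => hnp hc.1, rfl⟩

lemma not_isPi_eps (H : ∀ i, 3 < p ^ t i) (i : Fin (2 * m)) : ¬ isPi p m t (eps H i) := by
  intro hc
  have h := hc i
  simp [eps_val] at h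
  have := H i
  omega

lemma not_isPi_eps2 (H : ∀ i, 3 < p ^ t i) (i : Fin (2 * m)) : ¬ isPi p m t (eps2 H i) := by
  intro hc
  have h := hc i
  simp [eps2_val] at h
  have := H i
  omega

lemma not_isPi_decpi (H : ∀ i, 3 < p ^ t i) (r : Fin (2 * m)) :
    ¬ isPi p m t (dec (piIdx H) r) := by
  intro hc
  have h := hc r
  simp [dec_val, piIdx_val] at h
  have := H r
  omega

lemma h_mem_calH (H : ∀ i, 3 < p ^ t i) (hn : 0 < n) :
    DH p m n t F (xE p m n t F (piIdx H) ∅) ∈ calH p m n t F := by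
  apply Submodule.subset_span
  refine ⟨piIdx H, ∅, by simp, ?_, rfl⟩
  rintro ⟨-, huniv⟩
  have : (⟨0, hn⟩ : Fin n) ∈ (∅ : Finset (Fin n)) := huniv ▸ Finset.mem_univ _
  exact absurd this (Finset.notMem_empty _)

end Aux8
/-- if `n` is odd and `φ ∈ Der(𝓗,𝒲)` vanishes on `𝔑`, then `φ = 0`. -/
theorem stmt3 (p m n : ℕ) (t : Fin (2 * m) → ℕ) (F : Type) [Field F]
    (hp : 3 < p) (hchar : CharP F p) (hm : 1 < m) (hn : 3 < n) (ht : ∀ i, 1 ≤ t i) (hno : Odd n)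
    (φ : ↥(calH p m n t F) → W p m n t F)
    (hder : IsDerOn p m n t F (calH p m n t F) φ)
    (hvan : ∀ x : ↥(calH p m n t F), (x : W p m n t F) ∈ frakN p m n t F → φ x = 0) :
    ∀ x : ↥(calH p m n t F), φ x = 0 := by
  haveI := hchar
  have H : ∀ i, 3 < p ^ t i := fun i =>
    lt_of_lt_of_le hp (Nat.le_self_pow (by have := ht i; omega) p)
  have hm0 : 0 < m := by omega
  have h2F : (2 : F) ≠ 0 := by
    have hprime : Nat.Prime p := CharP.char_is_prime_of_two_le F p (by omega)
    intro h2
    have hdvd : (p : ℕ) ∣ 2 := (CharP.cast_eq_zero_iff F p 2).mp (by exact_mod_cast h2)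
    have := Nat.le_of_dvd (by norm_num) hdvd
    omega
  have hcast : ∀ i : Fin (2 * m), ((p ^ t i - 1 : ℕ) : F) = -1 := by
    intro i
    have h1 : 1 ≤ p ^ t i := by have := H i; omega
    have hp0 : (p : F) = 0 := CharP.cast_eq_zero F p
    rw [Nat.cast_sub h1, Nat.cast_pow, hp0,
      zero_pow (by have := ht i; omega : t i ≠ 0), Nat.cast_one]
    ring
  obtain ⟨⟨hadd, hsmul⟩, hW, hderiv⟩ := hder
  have hzero : φ 0 = 0 := by
    have h := hadd 0 0
    rw [add_zero] at h
    exact (left_eq_add.mp h)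
  have hh_mem : DH p m n t F (xE p m n t F (piIdx H) ∅) ∈ calH p m n t F :=
    h_mem_calH H (by omega)
  -- the key vanishing on the top element
  have key : φ ⟨DH p m n t F (xE p m n t F (piIdx H) ∅), hh_mem⟩ = 0 := by
    have main : ∀ y : W p m n t F, y ∈ frakN p m n t F →
        bra p m n t F y (DH p m n t F (xE p m n t F (piIdx H) ∅)) ∈ frakN p m n t F →
        bra p m n t F y (φ ⟨DH p m n t F (xE p m n t F (piIdx H) ∅), hh_mem⟩) = 0 := by
      intro y hyN hbN
      have hyH : y ∈ calH p m n t F := frakN_le_calH hyN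
      have hbH : bra p m n t F y (DH p m n t F (xE p m n t F (piIdx H) ∅))
          ∈ calH p m n t F := frakN_le_calH hbN
      have hid := hderiv ⟨y, hyH⟩ ⟨DH p m n t F (xE p m n t F (piIdx H) ∅), hh_mem⟩ hbH
      have hφy : φ ⟨y, hyH⟩ = 0 := hvan ⟨y, hyH⟩ hyN
      rw [hφy, bra_zero_right, sub_zero] at hid
      rw [hvan ⟨_, hbH⟩ hbN] at hid
      exact hid.symm
    apply centralizer H hm0 hn hno h2F (⟨0, by omega⟩ : Fin (2 * m)) _
      (hW ⟨DH p m n t F (xE p m n t F (piIdx H) ∅), hh_mem⟩)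
    · intro i
      refine main _ (gen_mem_frakN _ _ (by simp) (not_isPi_eps H i)) ?_
      rw [bra_y1_h H hm0 i]
      exact Submodule.smul_mem _ _ (gen_mem_frakN _ _ (by simp) (not_isPi_decpi H _))
    · intro i
      refine main _ (gen_mem_frakN _ _ (by simp) (not_isPi_eps2 H i)) ?_
      rw [bra_y2_h H hm0 hcast i]
      exact Submodule.zero_mem _
    · intro k l hkl
      refine main _ (gen_mem_frakN _ _ (even_pair hkl) (not_isPi_eps H _)) ?_
      rw [bra_y3_h H hm0 _ hkl]
      exact Submodule.smul_mem _ _ (gen_mem_frakN _ _ (even_pair hkl) (not_isPi_decpi H _))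
  rintro ⟨v, hv⟩
  refine Submodule.span_induction (p := fun v hv => φ ⟨v, hv⟩ = 0) ?_ ?_ ?_ ?_ hv
  · rintro w ⟨α, u, he, h1, hw⟩
    subst hw
    by_cases hpi : isPi p m t α ∧ u = ∅
    · obtain ⟨hpi1, hpi2⟩ := hpi
      subst hpi2
      have hα : α = piIdx H := funext fun i => Fin.ext (by rw [hpi1 i, piIdx_val])
      have heq : ∀ (hmem : DH p m n t F (xE p m n t F α ∅) ∈ calH p m n t F),
          (⟨DH p m n t F (xE p m n t F α ∅), hmem⟩ : ↥(calH p m n t F)) =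
            ⟨DH p m n t F (xE p m n t F (piIdx H) ∅), hh_mem⟩ :=
        fun hmem => Subtype.ext (by
          show DH p m n t F (xE p m n t F α ∅) = DH p m n t F (xE p m n t F (piIdx H) ∅)
          rw [hα])
      refine (congrArg φ (heq _)).trans ?_
      exact key
    · exact hvan _ (Submodule.subset_span ⟨α, u, he, h1, hpi, rfl⟩)
  · exact hzero
  · intro x y hx hy ihx ihy
    have heq : (⟨x + y, Submodule.add_mem _ hx hy⟩ : ↥(calH p m n t F)) =
        ⟨x, hx⟩ + ⟨y, hy⟩ := rfl
    rw [heq, hadd, ihx, ihy, add_zero]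
  · intro c x hx ih
    have heq : (⟨c • x, Submodule.smul_mem _ c hx⟩ : ↥(calH p m n t F)) =
        c • ⟨x, hx⟩ := rfl
    rw [heq, hsmul, ih, smul_zero]

end HamEven
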